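/- arXiv:1705.07532 — 12 statements merged into one kernel-verified Lean document; each statement's English description precedes it below -/
import Mathlib

section
/- Suppose Assumptions 1 and 2 hold. Then global consensus is achieved for the system x(t+1) = A(t) x(t) if and only if the persistent graph G_p contains a directed spanning tree. -/
open Filter Finset

/-- Arc `(j,i)` is persistent: `∑_{t=0}^∞ a_ij(t) = ∞`, where `a_ij(t) = A t i j`. -/
def PersistentArc {N : ℕ} (A : ℕ → Matrix (Fin N) (Fin N) ℝ) (j i : Fin N) : Prop :=
  Tendsto (fun n => ∑ t ∈ Finset.range n, A t i j) atTop atTop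

/-- A directed graph (given by its arc relation) contains a directed spanning tree:
there is a root from which every node is reachable along directed paths. -/
def HasDirectedSpanningTree {N : ℕ} (arc : Fin N → Fin N → Prop) : Prop :=
  ∃ r : Fin N, ∀ i : Fin N, Relation.ReflTransGen arc r i

-- self loops are persistent
lemma selfPers {N : ℕ} (A : ℕ → Matrix (Fin N) (Fin N) ℝ) (η : ℝ) (hη0 : 0 < η)
    (hdiag : ∀ t i, η ≤ A t i i) (i : Fin N) : PersistentArc A i i := by
  have h1 : Tendsto (fun n : ℕ => η * n) atTop atTop :=
    Tendsto.const_mul_atTop hη0 tendsto_natCast_atTop_atTop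
  refine tendsto_atTop_mono (fun n => ?_) h1
  calc η * n = ∑ _t ∈ Finset.range n, η := by simp [mul_comm]
  _ ≤ ∑ t ∈ Finset.range n, A t i i := Finset.sum_le_sum fun t _ => hdiag t i

-- a non-persistent arc has summable weights (partial sums bounded)
lemma nonPersBdd {N : ℕ} (A : ℕ → Matrix (Fin N) (Fin N) ℝ)
    (hnonneg : ∀ t i j, 0 ≤ A t i j) {j i : Fin N} (h : ¬ PersistentArc A j i) :
    Summable (fun t => A t i j) := by
  have hmono : Monotone (fun n => ∑ t ∈ Finset.range n, A t i j) := by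
    intro a b hab
    exact Finset.sum_le_sum_of_subset_of_nonneg (Finset.range_subset_range.2 hab)
      (fun t _ _ => hnonneg t i j)
  rcases tendsto_of_monotone hmono with h' | h'
  · exact absurd h' h
  · obtain ⟨c, hc⟩ := h'
    exact summable_of_sum_range_le (fun t => hnonneg t i j)
      (fun n => hmono.ge_of_tendsto hc n)

section Dyn
variable {N : ℕ} (A : ℕ → Matrix (Fin N) (Fin N) ℝ) (x : ℕ → Fin N → ℝ) (t0 : ℕ)
  (hnonneg : ∀ t i j, 0 ≤ A t i j) (hrow : ∀ t i, ∑ j, A t i j = 1)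
  (hx : ∀ t, t0 ≤ t → ∀ i, x (t + 1) i = ∑ j, A t i j * x t j)

include hnonneg hrow hx

lemma lowerInv {s : ℕ} (hs : t0 ≤ s) {μ : ℝ} (hμ : ∀ j, μ ≤ x s j) :
    ∀ t, s ≤ t → ∀ j, μ ≤ x t j := by
  intro t ht
  induction t, ht using Nat.le_induction with
  | base => exact hμ
  | succ t ht ih =>
    intro j
    rw [hx t (hs.trans ht) j]
    calc μ = ∑ l, A t j l * μ := by rw [← Finset.sum_mul, hrow]; ring
    _ ≤ ∑ l, A t j l * x t l := Finset.sum_le_sum fun l _ =>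
        mul_le_mul_of_nonneg_left (ih l) (hnonneg t j l)

lemma upperInv {s : ℕ} (hs : t0 ≤ s) {μ : ℝ} (hμ : ∀ j, x s j ≤ μ) :
    ∀ t, s ≤ t → ∀ j, x t j ≤ μ := by
  intro t ht
  induction t, ht using Nat.le_induction with
  | base => exact hμ
  | succ t ht ih =>
    intro j
    rw [hx t (hs.trans ht) j]
    calc ∑ l, A t j l * x t l ≤ ∑ l, A t j l * μ := Finset.sum_le_sum fun l _ =>
        mul_le_mul_of_nonneg_left (ih l) (hnonneg t j l)
    _ = μ := by rw [← Finset.sum_mul, hrow]; ring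

lemma stepArc {t : ℕ} (ht : t0 ≤ t) {μ : ℝ} (hμ : ∀ j, μ ≤ x t j) (j k : Fin N) :
    A t k j * (x t j - μ) ≤ x (t + 1) k - μ := by
  have h1 : x (t + 1) k - μ = ∑ l, A t k l * (x t l - μ) := by
    rw [hx t ht k]
    have : (μ : ℝ) = ∑ l, A t k l * μ := by rw [← Finset.sum_mul, hrow]; ring
    rw [Finset.sum_congr rfl (fun l _ => mul_sub (A t k l) (x t l) μ),
      Finset.sum_sub_distrib]
    rw [← Finset.sum_mul, hrow]; ring
  rw [h1]
  exact Finset.single_le_sum (f := fun l => A t k l * (x t l - μ))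
    (fun l _ => mul_nonneg (hnonneg t k l) (sub_nonneg.2 (hμ l))) (Finset.mem_univ j)

end Dyn

section Dyn2
variable {N : ℕ} {A : ℕ → Matrix (Fin N) (Fin N) ℝ} {x : ℕ → Fin N → ℝ} {t0 : ℕ}
  {η : ℝ} (hη0 : 0 < η)
  (hnonneg : ∀ t i j, 0 ≤ A t i j) (hrow : ∀ t i, ∑ j, A t i j = 1)
  (hdiag : ∀ t i, η ≤ A t i i)
  (hx : ∀ t, t0 ≤ t → ∀ i, x (t + 1) i = ∑ j, A t i j * x t j)
  {s0 : ℕ} (hs0 : t0 ≤ s0) {μ : ℝ} (hμ : ∀ t, s0 ≤ t → ∀ j, μ ≤ x t j)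

include hη0 hnonneg hrow hdiag hx hs0 hμ

lemma diagIter {s : ℕ} (hs : s0 ≤ s) (n : ℕ) (i : Fin N) :
    η ^ n * (x s i - μ) ≤ x (s + n) i - μ := by
  induction n with
  | zero => simp
  | succ n ih =>
    have hnn : 0 ≤ x (s + n) i - μ := sub_nonneg.2 (hμ _ (hs.trans (Nat.le_add_right s n)) i)
    have h2 : A (s + n) i i * (x (s + n) i - μ) ≤ x (s + n + 1) i - μ :=
      stepArc A x t0 hnonneg hrow hx (hs0.trans (hs.trans (Nat.le_add_right s n)))
        (hμ _ (hs.trans (Nat.le_add_right s n))) i i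
    have h3 : η * (x (s + n) i - μ) ≤ A (s + n) i i * (x (s + n) i - μ) :=
      mul_le_mul_of_nonneg_right (hdiag _ i) hnn
    have h4 : η ^ (n + 1) * (x s i - μ) ≤ η * (x (s + n) i - μ) := by
      calc η ^ (n + 1) * (x s i - μ) = η * (η ^ n * (x s i - μ)) := by ring
      _ ≤ η * (x (s + n) i - μ) := mul_le_mul_of_nonneg_left ih hη0.le
    calc η ^ (n + 1) * (x s i - μ) ≤ x (s + n + 1) i - μ := h4.trans (h3.trans h2)
    _ = x (s + (n + 1)) i - μ := by ring_nf
end Dyn2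

lemma windowBig {N : ℕ} {A : ℕ → Matrix (Fin N) (Fin N) ℝ} {η : ℝ} (hη0 : 0 < η)
    (hdiag : ∀ t i, η ≤ A t i i) {L : ℕ} (hL : 1 ≤ L) {K : ℝ} (hK : 1 ≤ K)
    (hbal : ∀ j i l k : Fin N, PersistentArc A j i → PersistentArc A l k →
      ∀ s : ℕ, ∑ t ∈ Finset.Ico s (s + L), A t k l ≤ K * ∑ t ∈ Finset.Ico s (s + L), A t i j)
    {j k : Fin N} (hjk : PersistentArc A j k) (s : ℕ) :
    ∃ t ∈ Finset.Ico s (s + L), η / K ≤ A t k j := by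
  have hK0 : (0:ℝ) < K := lt_of_lt_of_le one_pos hK
  have h1 := hbal j k k k hjk (selfPers A η hη0 hdiag k) s
  have h2 : (L : ℝ) * η ≤ ∑ t ∈ Finset.Ico s (s + L), A t k k := by
    calc (L : ℝ) * η = ∑ _t ∈ Finset.Ico s (s + L), η := by
          rw [Finset.sum_const, Nat.card_Ico]; simp [mul_comm]
    _ ≤ _ := Finset.sum_le_sum fun t _ => hdiag t k
  by_contra hcon
  push_neg at hcon
  have hne : (Finset.Ico s (s + L)).Nonempty := by
    rw [Finset.nonempty_Ico]; omega
  have h3 : ∑ t ∈ Finset.Ico s (s + L), A t k j < ∑ _t ∈ Finset.Ico s (s + L), η / K :=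
    Finset.sum_lt_sum_of_nonempty hne fun t ht => hcon t ht
  rw [Finset.sum_const, Nat.card_Ico, Nat.add_sub_cancel_left] at h3
  have h6 : K * ∑ t ∈ Finset.Ico s (s + L), A t k j < (L:ℝ) * η := by
    calc K * ∑ t ∈ Finset.Ico s (s + L), A t k j < K * (L • (η / K)) :=
        mul_lt_mul_of_pos_left h3 hK0
    _ = (L:ℝ) * η := by rw [nsmul_eq_mul]; field_simp
  linarith

section Dyn3
variable {N : ℕ} {A : ℕ → Matrix (Fin N) (Fin N) ℝ} {x : ℕ → Fin N → ℝ} {t0 : ℕ}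
  {η : ℝ} (hη0 : 0 < η)
  (hnonneg : ∀ t i j, 0 ≤ A t i j) (hrow : ∀ t i, ∑ j, A t i j = 1)
  (hdiag : ∀ t i, η ≤ A t i i)
  {L : ℕ} (hL : 1 ≤ L) {K : ℝ} (hK : 1 ≤ K)
  (hbal : ∀ j i l k : Fin N, PersistentArc A j i → PersistentArc A l k →
      ∀ s : ℕ, ∑ t ∈ Finset.Ico s (s + L), A t k l ≤ K * ∑ t ∈ Finset.Ico s (s + L), A t i j)
  (hx : ∀ t, t0 ≤ t → ∀ i, x (t + 1) i = ∑ j, A t i j * x t j)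
  {s0 : ℕ} (hs0 : t0 ≤ s0) {μ : ℝ} (hμ : ∀ t, s0 ≤ t → ∀ j, μ ≤ x t j)

include hη0 hnonneg hrow hdiag hL hK hbal hx hs0 hμ

lemma arcWindow {j k : Fin N} (hjk : PersistentArc A j k) {s : ℕ} (hs : s0 ≤ s) :
    η ^ L / K * (x s j - μ) ≤ x (s + L) k - μ := by
  obtain ⟨t, htmem, htA⟩ := windowBig hη0 hdiag hL hK hbal hjk s
  rw [Finset.mem_Ico] at htmem
  obtain ⟨hts, htL⟩ := htmem
  set d := t - s with hd
  have htd : t = s + d := by omega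
  have hdL : d < L := by omega
  have hK0 : (0:ℝ) < K := lt_of_lt_of_le one_pos hK
  have hxsj : 0 ≤ x s j - μ := sub_nonneg.2 (hμ s hs j)
  have hxtj : 0 ≤ x t j - μ := sub_nonneg.2 (hμ t (hs.trans (by omega)) j)
  -- step 1 : η^d * (x s j - μ) ≤ x t j - μ
  have h1 : η ^ d * (x s j - μ) ≤ x t j - μ := by
    rw [htd]; exact diagIter hη0 hnonneg hrow hdiag hx hs0 hμ hs d j
  -- step 2 : A t k j * (x t j - μ) ≤ x (t+1) k - μ
  have h2 : A t k j * (x t j - μ) ≤ x (t + 1) k - μ :=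
    stepArc A x t0 hnonneg hrow hx (hs0.trans (hs.trans (by omega)))
      (hμ t (hs.trans (by omega))) j k
  -- step 3 : η^(L-1-d) * (x (t+1) k - μ) ≤ x (s+L) k - μ
  have h3 : η ^ (L - 1 - d) * (x (t + 1) k - μ) ≤ x (s + L) k - μ := by
    have := diagIter hη0 hnonneg hrow hdiag hx hs0 hμ
      (show s0 ≤ t + 1 by omega) (L - 1 - d) k
    have he : t + 1 + (L - 1 - d) = s + L := by omega
    rwa [he] at this
  have h4 : η / K * (x t j - μ) ≤ A t k j * (x t j - μ) :=
    mul_le_mul_of_nonneg_right htA hxtj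
  have h5 : η ^ (L - 1 - d) * (η / K * (η ^ d * (x s j - μ))) ≤ x (s + L) k - μ := by
    calc η ^ (L - 1 - d) * (η / K * (η ^ d * (x s j - μ)))
        ≤ η ^ (L - 1 - d) * (η / K * (x t j - μ)) := by
          apply mul_le_mul_of_nonneg_left _ (pow_nonneg hη0.le _)
          exact mul_le_mul_of_nonneg_left h1 (by positivity)
    _ ≤ η ^ (L - 1 - d) * (A t k j * (x t j - μ)) :=
          mul_le_mul_of_nonneg_left h4 (pow_nonneg hη0.le _)
    _ ≤ η ^ (L - 1 - d) * (x (t + 1) k - μ) :=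
          mul_le_mul_of_nonneg_left h2 (pow_nonneg hη0.le _)
    _ ≤ x (s + L) k - μ := h3
  have hexp : η ^ (L - 1 - d) * (η / K * (η ^ d * (x s j - μ)))
      = η ^ L / K * (x s j - μ) := by
    have hp : η ^ (L - 1 - d) * η ^ 1 * η ^ d = η ^ L := by
      rw [← pow_add, ← pow_add]; congr 1; omega
    calc η ^ (L - 1 - d) * (η / K * (η ^ d * (x s j - μ)))
        = (η ^ (L - 1 - d) * η ^ 1 * η ^ d) / K * (x s j - μ) := by ring
    _ = η ^ L / K * (x s j - μ) := by rw [hp]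
  rwa [hexp] at h5

end Dyn3

section Dyn4
variable {N : ℕ} {A : ℕ → Matrix (Fin N) (Fin N) ℝ}
  {η : ℝ} (hη0 : 0 < η)
  (hnonneg : ∀ t i j, 0 ≤ A t i j) (hrow : ∀ t i, ∑ j, A t i j = 1)
  (hdiag : ∀ t i, η ≤ A t i i)
  {L : ℕ} (hL : 1 ≤ L) {K : ℝ} (hK : 1 ≤ K)
  (hbal : ∀ j i l k : Fin N, PersistentArc A j i → PersistentArc A l k →
      ∀ s : ℕ, ∑ t ∈ Finset.Ico s (s + L), A t k l ≤ K * ∑ t ∈ Finset.Ico s (s + L), A t i j)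

include hη0 hnonneg hrow hdiag hL hK hbal

lemma chainLB' {r i : Fin N} (h : Relation.ReflTransGen (PersistentArc A) r i) :
    ∃ n : ℕ, ∀ (x : ℕ → Fin N → ℝ) (t0 : ℕ),
      (∀ t, t0 ≤ t → ∀ i, x (t + 1) i = ∑ j, A t i j * x t j) →
      ∀ s, t0 ≤ s → ∀ μ : ℝ, (∀ t, s ≤ t → ∀ j, μ ≤ x t j) →
      (η ^ L / K) ^ n * (x s r - μ) ≤ x (s + n * L) i - μ := by
  have hβ0 : (0:ℝ) ≤ η ^ L / K := by positivity
  induction h with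
  | refl => exact ⟨0, fun x t0 hx s _ μ _ => by simp⟩
  | @tail b i hrb hbi ih =>
    obtain ⟨n, hn⟩ := ih
    refine ⟨n + 1, fun x t0 hx s hs μ hμ => ?_⟩
    have hs' : s ≤ s + n * L := Nat.le_add_right _ _
    have h1 : η ^ L / K * (x (s + n * L) b - μ) ≤ x (s + n * L + L) i - μ :=
      arcWindow hη0 hnonneg hrow hdiag hL hK hbal hx hs hμ hbi hs'
    have h2 : η ^ L / K * ((η ^ L / K) ^ n * (x s r - μ)) ≤ η ^ L / K * (x (s + n * L) b - μ) :=
      mul_le_mul_of_nonneg_left (hn x t0 hx s hs μ hμ) hβ0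
    have he : s + n * L + L = s + (n + 1) * L := by ring
    calc (η ^ L / K) ^ (n + 1) * (x s r - μ)
        = η ^ L / K * ((η ^ L / K) ^ n * (x s r - μ)) := by ring
    _ ≤ x (s + n * L + L) i - μ := h2.trans h1
    _ = x (s + (n + 1) * L) i - μ := by rw [he]


lemma uniformLB (hη1 : η < 1) {r : Fin N}
    (hr : ∀ i, Relation.ReflTransGen (PersistentArc A) r i) :
    ∃ T : ℕ, 1 ≤ T ∧ ∃ δ : ℝ, 0 < δ ∧ δ ≤ 1 ∧
      ∀ (x : ℕ → Fin N → ℝ) (t0 : ℕ),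
      (∀ t, t0 ≤ t → ∀ i, x (t + 1) i = ∑ j, A t i j * x t j) →
      ∀ s, t0 ≤ s → ∀ μ : ℝ, (∀ t, s ≤ t → ∀ j, μ ≤ x t j) →
        ∀ i, δ * (x s r - μ) ≤ x (s + T) i - μ := by
  have hK0 : (0:ℝ) < K := lt_of_lt_of_le one_pos hK
  set β : ℝ := η ^ L / K with hβ
  have hβ0 : 0 < β := by positivity
  have hβ1 : β ≤ 1 := by
    have h1 : η ^ L ≤ 1 := pow_le_one₀ hη0.le hη1.le
    calc β ≤ η ^ L := div_le_self (by positivity) hK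
    _ ≤ 1 := h1
  choose n hn using fun i => chainLB' hη0 hnonneg hrow hdiag hL hK hbal (hr i)
  set ns : ℕ := Finset.univ.sup n + 1 with hns
  refine ⟨ns * L, by nlinarith [Nat.one_le_iff_ne_zero.1 hL], β ^ ns, by positivity,
    pow_le_one₀ hβ0.le hβ1, fun x t0 hx s hs μ hμ i => ?_⟩
  have hni : n i ≤ ns := by
    have := Finset.le_sup (f := n) (Finset.mem_univ i); omega
  have hxr : 0 ≤ x s r - μ := sub_nonneg.2 (hμ s le_rfl r)
  have h1 : β ^ (n i) * (x s r - μ) ≤ x (s + n i * L) i - μ := hn i x t0 hx s hs μ hμ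
  have h2 : η ^ ((ns - n i) * L) * (x (s + n i * L) i - μ)
      ≤ x (s + n i * L + (ns - n i) * L) i - μ :=
    diagIter hη0 hnonneg hrow hdiag hx hs hμ (Nat.le_add_right _ _) _ i
  have he : s + n i * L + (ns - n i) * L = s + ns * L := by
    have : n i * L + (ns - n i) * L = ns * L := by
      rw [← Nat.add_mul]; congr 1; omega
    omega
  rw [he] at h2
  have hβη : β ^ (ns - n i) ≤ η ^ ((ns - n i) * L) := by
    rw [mul_comm, pow_mul]
    exact pow_le_pow_left₀ hβ0.le (div_le_self (by positivity) hK) _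
  have h3 : β ^ ns * (x s r - μ) ≤ η ^ ((ns - n i) * L) * (β ^ (n i) * (x s r - μ)) := by
    have hsplit : β ^ ns = β ^ (ns - n i) * β ^ (n i) := by
      rw [← pow_add]; congr 1; omega
    rw [hsplit]
    have : β ^ (ns - n i) * β ^ (n i) * (x s r - μ)
        = β ^ (ns - n i) * (β ^ (n i) * (x s r - μ)) := by ring
    rw [this]
    exact mul_le_mul_of_nonneg_right hβη (by positivity)
  calc β ^ ns * (x s r - μ) ≤ η ^ ((ns - n i) * L) * (β ^ (n i) * (x s r - μ)) := h3
  _ ≤ η ^ ((ns - n i) * L) * (x (s + n i * L) i - μ) :=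
      mul_le_mul_of_nonneg_left h1 (by positivity)
  _ ≤ x (s + ns * L) i - μ := h2

end Dyn4

section Conv
variable {N : ℕ} {A : ℕ → Matrix (Fin N) (Fin N) ℝ} {x : ℕ → Fin N → ℝ} {t0 : ℕ}
  {η : ℝ} (hη0 : 0 < η) (hη1 : η < 1) (hN : 2 ≤ N)
  (hnonneg : ∀ t i j, 0 ≤ A t i j) (hrow : ∀ t i, ∑ j, A t i j = 1)
  (hdiag : ∀ t i, η ≤ A t i i)
  {L : ℕ} (hL : 1 ≤ L) {K : ℝ} (hK : 1 ≤ K)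
  (hbal : ∀ j i l k : Fin N, PersistentArc A j i → PersistentArc A l k →
      ∀ s : ℕ, ∑ t ∈ Finset.Ico s (s + L), A t k l ≤ K * ∑ t ∈ Finset.Ico s (s + L), A t i j)
  (hx : ∀ t, t0 ≤ t → ∀ i, x (t + 1) i = ∑ j, A t i j * x t j)

include hη0 hη1 hN hnonneg hrow hdiag hL hK hbal hx

lemma consensus_of_tree {r : Fin N} (hr : ∀ i, Relation.ReflTransGen (PersistentArc A) r i) :
    ∃ c : ℝ, ∀ i, Tendsto (fun t => x t i) atTop (nhds c) := by
  have hNE : Nonempty (Fin N) := Fin.pos_iff_nonempty.mp (by omega)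
  have hune : (Finset.univ : Finset (Fin N)).Nonempty := Finset.univ_nonempty
  set m : ℕ → ℝ := fun t => Finset.univ.inf' hune (x t) with hm
  set M : ℕ → ℝ := fun t => Finset.univ.sup' hune (x t) with hM
  have hmle : ∀ t i, m t ≤ x t i := fun t i => Finset.inf'_le _ (Finset.mem_univ i)
  have hleM : ∀ t i, x t i ≤ M t := fun t i => Finset.le_sup' _ (Finset.mem_univ i)
  -- monotonicity of m and M after t0
  have hmlow : ∀ s, t0 ≤ s → ∀ t, s ≤ t → ∀ j, m s ≤ x t j := fun s hs =>
    lowerInv A x t0 hnonneg hrow hx hs (hmle s)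
  have hMup : ∀ s, t0 ≤ s → ∀ t, s ≤ t → ∀ j, x t j ≤ M s := fun s hs =>
    upperInv A x t0 hnonneg hrow hx hs (hleM s)
  have hmmono : ∀ s, t0 ≤ s → ∀ t, s ≤ t → m s ≤ m t := by
    intro s hs t ht
    exact Finset.le_inf' _ _ fun j _ => hmlow s hs t ht j
  have hMmono : ∀ s, t0 ≤ s → ∀ t, s ≤ t → M t ≤ M s := by
    intro s hs t ht
    exact Finset.sup'_le _ _ fun j _ => hMup s hs t ht j
  -- uniform lower bound data
  obtain ⟨T, hT1, δ, hδ0, hδ1, hunif⟩ :=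
    uniformLB hη0 hnonneg hrow hdiag hL hK hbal hη1 hr
  -- the same dynamics for -x
  have hx' : ∀ t, t0 ≤ t → ∀ i, (fun t i => -x t i) (t + 1) i
      = ∑ j, A t i j * (fun t i => -x t i) t j := by
    intro t ht i
    simp only [hx t ht i, ← Finset.sum_neg_distrib, mul_neg]
  -- contraction
  have hcontr : ∀ s, t0 ≤ s → M (s + T) - m (s + T) ≤ (1 - δ) * (M s - m s) := by
    intro s hs
    have hlow : ∀ i, m s + δ * (x s r - m s) ≤ x (s + T) i := by
      intro i
      have := hunif x t0 hx s hs (m s) (hmlow s hs) i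
      linarith
    have hup : ∀ i, x (s + T) i ≤ M s - δ * (M s - x s r) := by
      intro i
      have := hunif (fun t i => -x t i) t0 hx' s hs (-(M s))
        (fun t ht j => neg_le_neg (hMup s hs t ht j)) i
      linarith
    have hMsT : M (s + T) ≤ M s - δ * (M s - x s r) :=
      Finset.sup'_le _ _ fun j _ => hup j
    have hmsT : m s + δ * (x s r - m s) ≤ m (s + T) :=
      Finset.le_inf' _ _ fun j _ => hlow j
    nlinarith
  have hd0 : ∀ t, 0 ≤ M t - m t := by
    intro t
    have h1 := hmle t r; have h2 := hleM t r; linarith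
  have h1δ0 : 0 ≤ 1 - δ := by linarith
  have h1δ1 : 1 - δ < 1 := by linarith
  -- geometric decay along the subsequence t0 + k * T
  have hgeo : ∀ k : ℕ, M (t0 + k * T) - m (t0 + k * T) ≤ (1 - δ) ^ k * (M t0 - m t0) := by
    intro k
    induction k with
    | zero => simp
    | succ k ih =>
      have he : t0 + (k + 1) * T = t0 + k * T + T := by ring
      have h2 := hcontr (t0 + k * T) (Nat.le_add_right _ _)
      have h3 : (1 - δ) * (M (t0 + k * T) - m (t0 + k * T))
          ≤ (1 - δ) * ((1 - δ) ^ k * (M t0 - m t0)) :=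
        mul_le_mul_of_nonneg_left ih h1δ0
      rw [he]
      calc M (t0 + k * T + T) - m (t0 + k * T + T)
          ≤ (1 - δ) * (M (t0 + k * T) - m (t0 + k * T)) := h2
      _ ≤ (1 - δ) * ((1 - δ) ^ k * (M t0 - m t0)) := h3
      _ = (1 - δ) ^ (k + 1) * (M t0 - m t0) := by ring
  -- the spread tends to zero
  have hg : Tendsto (fun t : ℕ => (1 - δ) ^ ((t - t0) / T) * (M t0 - m t0)) atTop (nhds 0) := by
    have hdiv : Tendsto (fun t : ℕ => (t - t0) / T) atTop atTop := by
      apply tendsto_atTop_atTop.2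
      intro b
      refine ⟨t0 + b * T, fun t ht => ?_⟩
      rw [Nat.le_div_iff_mul_le (by omega)]
      omega
    have hpow : Tendsto (fun k : ℕ => (1 - δ) ^ k) atTop (nhds 0) :=
      tendsto_pow_atTop_nhds_zero_of_lt_one h1δ0 h1δ1
    have := (hpow.comp hdiv).mul_const (M t0 - m t0)
    simpa using this
  have hdto : Tendsto (fun t => M t - m t) atTop (nhds 0) := by
    apply squeeze_zero' (Eventually.of_forall hd0)
      ((eventually_ge_atTop t0).mono fun t ht => ?_) hg
    set k := (t - t0) / T with hk
    have hkt : t0 + k * T ≤ t := by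
      have h9 := Nat.div_mul_le_self (t - t0) T
      rw [← hk] at h9
      omega
    have h4 := hgeo k
    have h5 := hmmono (t0 + k * T) (Nat.le_add_right _ _) t hkt
    have h6 := hMmono (t0 + k * T) (Nat.le_add_right _ _) t hkt
    linarith
  -- m converges
  have hmono2 : Monotone (fun k : ℕ => m (k + t0)) := by
    intro a b hab
    exact hmmono (a + t0) (Nat.le_add_left _ _) (b + t0) (by omega)
  have hbdd : ∀ k : ℕ, m (k + t0) ≤ M t0 := by
    intro k
    have := hMup t0 le_rfl (k + t0) (Nat.le_add_left _ _)
    have h7 := hmle (k + t0) r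
    have h8 := this r
    linarith
  obtain ⟨c, hc⟩ : ∃ c, Tendsto (fun k : ℕ => m (k + t0)) atTop (nhds c) := by
    rcases tendsto_of_monotone hmono2 with h | h
    · exfalso
      obtain ⟨k, hk⟩ := (tendsto_atTop.1 h (M t0 + 1)).exists
      have := hbdd k; linarith
    · exact h
  have hmc : Tendsto m atTop (nhds c) := (tendsto_add_atTop_iff_nat t0).1 hc
  have hMc : Tendsto M atTop (nhds c) := by
    have := hdto.add hmc
    simpa using this
  refine ⟨c, fun i => ?_⟩
  exact tendsto_of_tendsto_of_tendsto_of_le_of_le hmc hMc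
    (fun t => hmle t i) (fun t => hleM t i)
end Conv

open scoped Classical in
lemma exists_disjoint_basins {N : ℕ} (hN : 1 ≤ N) (arc : Fin N → Fin N → Prop)
    (h : ¬ HasDirectedSpanningTree arc) :
    ∃ i1 i2 : Fin N, ∀ j : Fin N,
      ¬ (Relation.ReflTransGen arc j i1 ∧ Relation.ReflTransGen arc j i2) := by
  have hNE : Nonempty (Fin N) := Fin.pos_iff_nonempty.mp (by omega)
  set C : Fin N → Finset (Fin N) :=
    fun i => Finset.univ.filter (fun j => Relation.ReflTransGen arc j i) with hC
  have hmemC : ∀ i j, j ∈ C i ↔ Relation.ReflTransGen arc j i := by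
    intro i j; simp [hC]
  obtain ⟨i1, _, hmin⟩ := Finset.exists_min_image Finset.univ (fun i => (C i).card)
    Finset.univ_nonempty
  -- for j ∈ C i1, C j = C i1
  have hCeq : ∀ j ∈ C i1, C j = C i1 := by
    intro j hj
    have hsub : C j ⊆ C i1 := by
      intro l hl
      rw [hmemC] at hl ⊢
      exact hl.trans ((hmemC i1 j).1 hj)
    exact Finset.eq_of_subset_of_card_le hsub (hmin j (Finset.mem_univ j))
  refine ⟨i1, ?_⟩
  by_contra hcon
  push_neg at hcon
  apply h
  refine ⟨i1, fun i => ?_⟩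
  obtain ⟨j, hj1, hj2⟩ := hcon i
  have hji1 : j ∈ C i1 := (hmemC i1 j).2 hj1
  have : i1 ∈ C j := by
    rw [hCeq j hji1]
    exact (hmemC i1 i1).2 Relation.ReflTransGen.refl
  exact ((hmemC j i1).1 this).trans hj2

open scoped Classical in
lemma no_consensus_of_no_tree {N : ℕ} (hN : 2 ≤ N) {A : ℕ → Matrix (Fin N) (Fin N) ℝ}
    (hnonneg : ∀ t i j, 0 ≤ A t i j) (hrow : ∀ t i, ∑ j, A t i j = 1)
    (h : ¬ HasDirectedSpanningTree (PersistentArc A)) :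
    ¬ (∀ t0 : ℕ, ∀ x : ℕ → Fin N → ℝ,
        (∀ t, t0 ≤ t → ∀ i, x (t + 1) i = ∑ j, A t i j * x t j) →
        ∃ c : ℝ, ∀ i, Tendsto (fun t => x t i) atTop (nhds c)) := by
  intro hcons
  obtain ⟨i1, i2, hdisj⟩ := exists_disjoint_basins (by omega) (PersistentArc A) h
  set S1 : Finset (Fin N) :=
    Finset.univ.filter (fun j => Relation.ReflTransGen (PersistentArc A) j i1) with hS1
  set S2 : Finset (Fin N) :=
    Finset.univ.filter (fun j => Relation.ReflTransGen (PersistentArc A) j i2) with hS2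
  have hi1 : i1 ∈ S1 := by simp [hS1, Relation.ReflTransGen.refl]
  have hi2 : i2 ∈ S2 := by simp [hS2, Relation.ReflTransGen.refl]
  have hdisj' : ∀ j, j ∈ S1 → j ∉ S2 := by
    intro j hj1 hj2
    rw [hS1, Finset.mem_filter] at hj1
    rw [hS2, Finset.mem_filter] at hj2
    exact hdisj j ⟨hj1.2, hj2.2⟩
  have hclosed1 : ∀ k ∈ S1, ∀ l, PersistentArc A l k → l ∈ S1 := by
    intro k hk l hlk
    rw [hS1, Finset.mem_filter] at hk ⊢
    exact ⟨Finset.mem_univ l, (Relation.ReflTransGen.single hlk).trans hk.2⟩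
  have hclosed2 : ∀ k ∈ S2, ∀ l, PersistentArc A l k → l ∈ S2 := by
    intro k hk l hlk
    rw [hS2, Finset.mem_filter] at hk ⊢
    exact ⟨Finset.mem_univ l, (Relation.ReflTransGen.single hlk).trans hk.2⟩
  -- the total cross weight function
  set f : ℕ → ℝ := fun t => ∑ k, ∑ l,
    (if (k ∈ S1 ∧ l ∉ S1) ∨ (k ∈ S2 ∧ l ∉ S2) then A t k l else 0) with hf
  have hf0 : ∀ t, 0 ≤ f t := by
    intro t
    apply Finset.sum_nonneg; intro k _
    apply Finset.sum_nonneg; intro l _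
    split
    · exact hnonneg t k l
    · exact le_rfl
  have hfsummable : Summable f := by
    rw [hf]
    apply summable_sum; intro k _
    apply summable_sum; intro l _
    by_cases hcase : (k ∈ S1 ∧ l ∉ S1) ∨ (k ∈ S2 ∧ l ∉ S2)
    · simp only [hcase, if_true]
      rcases hcase with ⟨hk, hl⟩ | ⟨hk, hl⟩
      · exact nonPersBdd A hnonneg (fun hp => hl (hclosed1 k hk l hp))
      · exact nonPersBdd A hnonneg (fun hp => hl (hclosed2 k hk l hp))
    · simp only [hcase, if_false]
      exact summable_zero
  -- choose t0 so that the total cross weight after t0 is at most 1/4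
  set P : ℕ → ℝ := fun n => ∑ t ∈ Finset.range n, f t with hP
  have hPmono : Monotone P := by
    intro a b hab
    exact Finset.sum_le_sum_of_subset_of_nonneg (Finset.range_subset_range.2 hab)
      (fun t _ _ => hf0 t)
  have hPtend : Tendsto P atTop (nhds (∑' t, f t)) := hfsummable.hasSum.tendsto_sum_nat
  have hPle : ∀ n, P n ≤ ∑' t, f t := fun n =>
    Summable.sum_le_tsum (Finset.range n) (fun t _ => hf0 t) hfsummable
  obtain ⟨t0, ht0⟩ : ∃ t0, (∑' t, f t) - 1/4 < P t0 := by
    have : (∑' t, f t) - 1/4 < ∑' t, f t := by linarith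
    exact (hPtend.eventually (lt_mem_nhds this)).exists
  have htail : ∀ a b : ℕ, t0 ≤ a → ∑ t ∈ Finset.Ico a b, f t ≤ 1/4 := by
    intro a b ha
    rcases le_or_gt a b with hab | hab
    · have he : ∑ t ∈ Finset.Ico a b, f t = P b - P a := by
        rw [hP]
        rw [Finset.sum_Ico_eq_sub _ hab]
      rw [he]
      have h1 := hPle b
      have h2 := hPmono ha
      linarith
    · rw [Finset.Ico_eq_empty (by omega)]
      simp
  -- construct the trajectory
  set y : ℕ → Fin N → ℝ := fun n => Nat.rec (fun i => if i ∈ S2 then (1:ℝ) else 0)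
    (fun n yn i => ∑ j, A (t0 + n) i j * yn j) n with hy
  set x : ℕ → Fin N → ℝ := fun t => y (t - t0) with hxdef
  have hy0 : ∀ i, y 0 i = if i ∈ S2 then (1:ℝ) else 0 := fun i => rfl
  have hystep : ∀ n i, y (n + 1) i = ∑ j, A (t0 + n) i j * y n j := fun n i => rfl
  have hx : ∀ t, t0 ≤ t → ∀ i, x (t + 1) i = ∑ j, A t i j * x t j := by
    intro t ht i
    have h1 : t + 1 - t0 = (t - t0) + 1 := by omega
    have h2 : t0 + (t - t0) = t := by omega
    rw [hxdef]
    simp only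
    rw [h1, hystep, h2]
  -- bounds 0 ≤ x ≤ 1
  have hxlb : ∀ t, t0 ≤ t → ∀ j, (0:ℝ) ≤ x t j := by
    apply lowerInv A x t0 hnonneg hrow hx le_rfl
    intro j
    rw [hxdef]; simp only [Nat.sub_self, hy0]
    split <;> norm_num
  have hxub : ∀ t, t0 ≤ t → ∀ j, x t j ≤ (1:ℝ) := by
    apply upperInv A x t0 hnonneg hrow hx le_rfl
    intro j
    rw [hxdef]; simp only [Nat.sub_self, hy0]
    split <;> norm_num
  -- the accumulated error
  set E : ℕ → ℝ := fun t => ∑ s ∈ Finset.Ico t0 t, f s with hE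
  have hE0 : ∀ t, 0 ≤ E t := fun t => Finset.sum_nonneg fun s _ => hf0 s
  have hE14 : ∀ t, E t ≤ 1/4 := fun t => htail t0 t le_rfl
  have hEstep : ∀ t, t0 ≤ t → E (t + 1) = E t + f t := by
    intro t ht
    rw [hE]
    simp only
    rw [Finset.sum_Ico_succ_top ht]
  -- cross weight bounds
  have hcross1 : ∀ t, ∀ k ∈ S1, ∑ l ∈ Finset.univ.filter (· ∉ S1), A t k l ≤ f t := by
    intro t k hk
    rw [hf]
    have h1 : ∑ l ∈ Finset.univ.filter (· ∉ S1), A t k l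
        = ∑ l, (if l ∉ S1 then A t k l else 0) := Finset.sum_filter _ _
    rw [h1]
    have h2 : ∑ l, (if l ∉ S1 then A t k l else 0)
        ≤ ∑ l, (if (k ∈ S1 ∧ l ∉ S1) ∨ (k ∈ S2 ∧ l ∉ S2) then A t k l else 0) := by
      apply Finset.sum_le_sum
      intro l _
      by_cases hl : l ∉ S1
      · rw [if_pos hl, if_pos (Or.inl ⟨hk, hl⟩)]
      · simp only [hl, if_false]
        split
        · exact hnonneg t k l
        · exact le_rfl
    refine h2.trans ?_
    exact Finset.single_le_sum (f := fun k' => ∑ l,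
        (if (k' ∈ S1 ∧ l ∉ S1) ∨ (k' ∈ S2 ∧ l ∉ S2) then A t k' l else 0))
      (fun k' _ => Finset.sum_nonneg fun l _ => by
        split
        · exact hnonneg t k' l
        · exact le_rfl) (Finset.mem_univ k)
  have hcross2 : ∀ t, ∀ k ∈ S2, ∑ l ∈ Finset.univ.filter (· ∉ S2), A t k l ≤ f t := by
    intro t k hk
    rw [hf]
    have h1 : ∑ l ∈ Finset.univ.filter (· ∉ S2), A t k l
        = ∑ l, (if l ∉ S2 then A t k l else 0) := Finset.sum_filter _ _
    rw [h1]
    have h2 : ∑ l, (if l ∉ S2 then A t k l else 0)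
        ≤ ∑ l, (if (k ∈ S1 ∧ l ∉ S1) ∨ (k ∈ S2 ∧ l ∉ S2) then A t k l else 0) := by
      apply Finset.sum_le_sum
      intro l _
      by_cases hl : l ∉ S2
      · rw [if_pos hl, if_pos (Or.inr ⟨hk, hl⟩)]
      · simp only [hl, if_false]
        split
        · exact hnonneg t k l
        · exact le_rfl
    refine h2.trans ?_
    exact Finset.single_le_sum (f := fun k' => ∑ l,
        (if (k' ∈ S1 ∧ l ∉ S1) ∨ (k' ∈ S2 ∧ l ∉ S2) then A t k' l else 0))
      (fun k' _ => Finset.sum_nonneg fun l _ => by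
        split
        · exact hnonneg t k' l
        · exact le_rfl) (Finset.mem_univ k)
  -- key invariant
  have key : ∀ t, t0 ≤ t → (∀ k ∈ S1, x t k ≤ E t) ∧ (∀ k ∈ S2, 1 - E t ≤ x t k) := by
    intro t ht
    induction t, ht using Nat.le_induction with
    | base =>
      have hE00 : E t0 = 0 := by rw [hE]; simp
      constructor
      · intro k hk
        have hk2 : k ∉ S2 := hdisj' k hk
        rw [hxdef]
        simp only [Nat.sub_self, hy0, hk2, if_false, hE00]
        exact le_rfl
      · intro k hk
        rw [hxdef]
        simp only [Nat.sub_self, hy0, hk, if_true, hE00]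
        norm_num
    | succ t ht ih =>
      obtain ⟨ih1, ih2⟩ := ih
      have hsplit : ∀ k, x (t + 1) k =
          (∑ l ∈ Finset.univ.filter (· ∈ S1), A t k l * x t l)
          + ∑ l ∈ Finset.univ.filter (· ∉ S1), A t k l * x t l := by
        intro k
        rw [hx t ht k]
        exact (Finset.sum_filter_add_sum_filter_not _ _ _).symm
      have hsplit2 : ∀ k, x (t + 1) k =
          (∑ l ∈ Finset.univ.filter (· ∈ S2), A t k l * x t l)
          + ∑ l ∈ Finset.univ.filter (· ∉ S2), A t k l * x t l := by
        intro k
        rw [hx t ht k]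
        exact (Finset.sum_filter_add_sum_filter_not _ _ _).symm
      constructor
      · intro k hk
        rw [hsplit k, hEstep t ht]
        have hpart1 : ∑ l ∈ Finset.univ.filter (· ∈ S1), A t k l * x t l ≤ E t := by
          calc ∑ l ∈ Finset.univ.filter (· ∈ S1), A t k l * x t l
              ≤ ∑ l ∈ Finset.univ.filter (· ∈ S1), A t k l * E t := by
                apply Finset.sum_le_sum
                intro l hl
                rw [Finset.mem_filter] at hl
                exact mul_le_mul_of_nonneg_left (ih1 l hl.2) (hnonneg t k l)
          _ = (∑ l ∈ Finset.univ.filter (· ∈ S1), A t k l) * E t := by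
                rw [Finset.sum_mul]
          _ ≤ 1 * E t := by
                apply mul_le_mul_of_nonneg_right _ (hE0 t)
                rw [← hrow t k]
                exact Finset.sum_le_sum_of_subset_of_nonneg (Finset.filter_subset _ _)
                  (fun l _ _ => hnonneg t k l)
          _ = E t := one_mul _
        have hpart2 : ∑ l ∈ Finset.univ.filter (· ∉ S1), A t k l * x t l ≤ f t := by
          calc ∑ l ∈ Finset.univ.filter (· ∉ S1), A t k l * x t l
              ≤ ∑ l ∈ Finset.univ.filter (· ∉ S1), A t k l * 1 := by
                apply Finset.sum_le_sum
                intro l _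
                exact mul_le_mul_of_nonneg_left (hxub t ht l) (hnonneg t k l)
          _ = ∑ l ∈ Finset.univ.filter (· ∉ S1), A t k l := by simp
          _ ≤ f t := hcross1 t k hk
        linarith
      · intro k hk
        rw [hsplit2 k, hEstep t ht]
        have hpart1 : (1 - ∑ l ∈ Finset.univ.filter (· ∉ S2), A t k l) * (1 - E t)
            ≤ ∑ l ∈ Finset.univ.filter (· ∈ S2), A t k l * x t l := by
          have hsum2 : ∑ l ∈ Finset.univ.filter (· ∈ S2), A t k l
              = 1 - ∑ l ∈ Finset.univ.filter (· ∉ S2), A t k l := by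
            have := Finset.sum_filter_add_sum_filter_not Finset.univ (· ∈ S2) (A t k)
            rw [hrow t k] at this
            have heq : Finset.univ.filter (fun l => ¬ l ∈ S2)
                = Finset.univ.filter (· ∉ S2) := rfl
            linarith [this]
          calc (1 - ∑ l ∈ Finset.univ.filter (· ∉ S2), A t k l) * (1 - E t)
              = ∑ l ∈ Finset.univ.filter (· ∈ S2), A t k l * (1 - E t) := by
                rw [← Finset.sum_mul, hsum2]
          _ ≤ ∑ l ∈ Finset.univ.filter (· ∈ S2), A t k l * x t l := by
                apply Finset.sum_le_sum
                intro l hl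
                rw [Finset.mem_filter] at hl
                exact mul_le_mul_of_nonneg_left (ih2 l hl.2) (hnonneg t k l)
        have hpart2 : (0:ℝ) ≤ ∑ l ∈ Finset.univ.filter (· ∉ S2), A t k l * x t l :=
          Finset.sum_nonneg fun l _ => mul_nonneg (hnonneg t k l) (hxlb t ht l)
        have ha0 : (0:ℝ) ≤ ∑ l ∈ Finset.univ.filter (· ∉ S2), A t k l :=
          Finset.sum_nonneg fun l _ => hnonneg t k l
        have haf : ∑ l ∈ Finset.univ.filter (· ∉ S2), A t k l ≤ f t := hcross2 t k hk
        have hEt : E t ≤ 1/4 := hE14 t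
        nlinarith [hE0 t]
  -- contradiction
  obtain ⟨c, hc⟩ := hcons t0 x hx
  have hc1 : c ≤ 1/4 := by
    apply le_of_tendsto (hc i1)
    filter_upwards [eventually_ge_atTop t0] with t ht
    exact ((key t ht).1 i1 hi1).trans (hE14 t)
  have hc2 : 3/4 ≤ c := by
    apply ge_of_tendsto (hc i2)
    filter_upwards [eventually_ge_atTop t0] with t ht
    have := (key t ht).2 i2 hi2
    have := hE14 t
    linarith
  linarith

theorem stmt0 (N : ℕ) (hN : 2 ≤ N) (A : ℕ → Matrix (Fin N) (Fin N) ℝ)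
    (η : ℝ) (hη0 : 0 < η) (hη1 : η < 1)
    (hnonneg : ∀ t i j, 0 ≤ A t i j)
    (hrow : ∀ t i, ∑ j, A t i j = 1)
    (hdiag : ∀ t i, η ≤ A t i i)
    (L : ℕ) (hL : 1 ≤ L) (K : ℝ) (hK : 1 ≤ K)
    (hbal : ∀ j i l k : Fin N, PersistentArc A j i → PersistentArc A l k →
      ∀ s : ℕ, ∑ t ∈ Finset.Ico s (s + L), A t k l ≤ K * ∑ t ∈ Finset.Ico s (s + L), A t i j) :
    (∀ t0 : ℕ, ∀ x : ℕ → Fin N → ℝ,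
        (∀ t, t0 ≤ t → ∀ i, x (t + 1) i = ∑ j, A t i j * x t j) →
        ∃ c : ℝ, ∀ i, Tendsto (fun t => x t i) atTop (nhds c)) ↔
      HasDirectedSpanningTree (PersistentArc A) := by
  constructor
  · intro hcons
    by_contra htree
    exact no_consensus_of_no_tree hN hnonneg hrow htree hcons
  · rintro ⟨r, hr⟩ t0 x hx
    exact consensus_of_tree hη0 hη1 hN hnonneg hrow hdiag hL hK hbal hx hr
end

section
/- Consider the system x(t+1) = A(t) x(t) with each A(t) row-stochastic and entrywise nonnegative. Suppose that for some s ≥ 0, some node i, and some 0 ≤ μ < 1 we have x_i(s) ≤ μ h(s) + (1 − μ) H(s). Then for every integer T ≥ 0 and every 0 ≤ τ ≤ T, x_i(s + τ) ≤ μ (∏_{k=0}^{T−1} a_ii(s + k)) · h(s) + (1 − μ ∏_{k=0}^{T−1} a_ii(s + k)) · H(s). -/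
open Filter Finset

theorem stmt5 (N : ℕ) (hN : 2 ≤ N) (A : ℕ → Matrix (Fin N) (Fin N) ℝ)
    (hnonneg : ∀ t i j, 0 ≤ A t i j)
    (hrow : ∀ t i, ∑ j, A t i j = 1)
    (x : ℕ → Fin N → ℝ)
    (hx : ∀ t i, x (t + 1) i = ∑ j, A t i j * x t j)
    (s : ℕ) (i : Fin N) (μ : ℝ) (hμ0 : 0 ≤ μ) (hμ1 : μ < 1)
    (hxi : x s i ≤ μ * (⨅ j, x s j) + (1 - μ) * (⨆ j, x s j)) :
    ∀ T τ : ℕ, τ ≤ T →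
      x (s + τ) i ≤
        μ * (∏ k ∈ Finset.range T, A (s + k) i i) * (⨅ j, x s j) +
          (1 - μ * ∏ k ∈ Finset.range T, A (s + k) i i) * (⨆ j, x s j) := by
  haveI : Nonempty (Fin N) := ⟨⟨0, by omega⟩⟩
  set h : ℝ := ⨅ j, x s j with hh
  set H : ℝ := ⨆ j, x s j with hH
  have hbase : ∀ j, h ≤ x s j ∧ x s j ≤ H := fun j =>
    ⟨ciInf_le (Set.Finite.bddBelow (Set.finite_range _)) j,
     le_ciSup (Set.Finite.bddAbove (Set.finite_range _)) j⟩
  have hbounds : ∀ t j, h ≤ x (s + t) j ∧ x (s + t) j ≤ H := by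
    intro t
    induction t with
    | zero => simpa using hbase
    | succ t ih =>
      intro j
      have hrec : x (s + (t + 1)) j = ∑ k, A (s + t) j k * x (s + t) k := by
        have := hx (s + t) j
        rw [show s + (t + 1) = s + t + 1 by ring]
        exact this
      constructor
      · rw [hrec]
        calc h = ∑ k, A (s + t) j k * h := by
                rw [← Finset.sum_mul, hrow, one_mul]
          _ ≤ ∑ k, A (s + t) j k * x (s + t) k := by
                apply Finset.sum_le_sum
                intro k _
                exact mul_le_mul_of_nonneg_left (ih k).1 (hnonneg _ _ _)
      · rw [hrec]
        calc ∑ k, A (s + t) j k * x (s + t) k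
            ≤ ∑ k, A (s + t) j k * H := by
                apply Finset.sum_le_sum
                intro k _
                exact mul_le_mul_of_nonneg_left (ih k).2 (hnonneg _ _ _)
          _ = H := by rw [← Finset.sum_mul, hrow, one_mul]
  have hhH : h ≤ H := (hbase i).1.trans (hbase i).2
  have haii_le : ∀ t, A t i i ≤ 1 := by
    intro t
    have := hrow t i
    calc A t i i ≤ ∑ j, A t i j :=
          Finset.single_le_sum (fun j _ => hnonneg t i j) (Finset.mem_univ i)
      _ = 1 := this
  have hprod_nonneg : ∀ T, 0 ≤ ∏ k ∈ Finset.range T, A (s + k) i i := fun T =>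
    Finset.prod_nonneg fun k _ => hnonneg _ _ _
  -- main induction: bound at τ with product over range τ
  have key : ∀ τ : ℕ,
      x (s + τ) i ≤ μ * (∏ k ∈ Finset.range τ, A (s + k) i i) * h +
        (1 - μ * ∏ k ∈ Finset.range τ, A (s + k) i i) * H := by
    intro τ
    induction τ with
    | zero => simpa using hxi
    | succ τ ih =>
      set P := ∏ k ∈ Finset.range τ, A (s + k) i i with hP
      have hPn : 0 ≤ P := hprod_nonneg τ
      set a := A (s + τ) i i with ha
      have han : 0 ≤ a := hnonneg _ _ _
      have hprodsucc : ∏ k ∈ Finset.range (τ + 1), A (s + k) i i = P * a := by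
        rw [Finset.prod_range_succ]
      have hrec : x (s + (τ + 1)) i = ∑ k, A (s + τ) i k * x (s + τ) k := by
        have := hx (s + τ) i
        rw [show s + (τ + 1) = s + τ + 1 by ring]
        exact this
      have hsplit : ∑ k, A (s + τ) i k * x (s + τ) k
          = a * x (s + τ) i + ∑ k ∈ Finset.univ.erase i, A (s + τ) i k * x (s + τ) k := by
        rw [← Finset.add_sum_erase _ _ (Finset.mem_univ i)]
      have hrest : ∑ k ∈ Finset.univ.erase i, A (s + τ) i k * x (s + τ) k
          ≤ (1 - a) * H := by
        have hsum : ∑ k ∈ Finset.univ.erase i, A (s + τ) i k = 1 - a := by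
          have h2 := hrow (s + τ) i
          rw [← Finset.add_sum_erase _ _ (Finset.mem_univ i)] at h2
          linarith
        calc ∑ k ∈ Finset.univ.erase i, A (s + τ) i k * x (s + τ) k
            ≤ ∑ k ∈ Finset.univ.erase i, A (s + τ) i k * H := by
              apply Finset.sum_le_sum
              intro k _
              exact mul_le_mul_of_nonneg_left (hbounds τ k).2 (hnonneg _ _ _)
          _ = (1 - a) * H := by rw [← Finset.sum_mul, hsum]
      have hmid : a * x (s + τ) i ≤ a * (μ * P * h + (1 - μ * P) * H) :=
        mul_le_mul_of_nonneg_left ih han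
      rw [hrec, hsplit, hprodsucc]
      have haH : a * H ≤ H ∨ True := Or.inr trivial
      nlinarith [hrest, hmid]
  intro T τ hτT
  have hPle : ∏ k ∈ Finset.range T, A (s + k) i i ≤ ∏ k ∈ Finset.range τ, A (s + k) i i := by
    obtain ⟨d, rfl⟩ := Nat.exists_eq_add_of_le hτT
    rw [Finset.prod_range_add]
    have hQ1 : ∏ k ∈ Finset.range d, A (s + (τ + k)) i i ≤ 1 :=
      Finset.prod_le_one (fun k _ => hnonneg _ _ _) (fun k _ => haii_le _)
    have hQ0 : 0 ≤ ∏ k ∈ Finset.range d, A (s + (τ + k)) i i :=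
      Finset.prod_nonneg (fun k _ => hnonneg _ _ _)
    nlinarith [hprod_nonneg τ]
  have := key τ
  nlinarith [mul_nonneg (mul_nonneg hμ0 (sub_nonneg.mpr hPle)) (sub_nonneg.mpr hhH)]
end

section
/- Let A_1, A_2, …, A_m be N×N row-stochastic matrices with nonnegative entries such that every diagonal entry of every A_i is at least η, where 0 < η < 1. Let B_m = A_1 A_2 ⋯ A_m and C_m = A_1 + ⋯ + A_m. Then for every nonempty proper subset S of {1,…,N}, ∑_{i∈S, j∉S} (B_m)_{ij} ≥ η^{m−1} ∑_{i∈S, j∉S} (C_m)_{ij}. -/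
/-!
Let `cut S M` be the mass `M` sends from `S` to `Sᶜ`. For entrywise nonnegative `A, B`
with diagonals bounded below by `a, b`,
`cut S (A * B) = ∑ k, (∑ i ∈ S, A i k) * (∑ j ∉ S, B k j)`; for `k ∈ S` the first factor
is at least `A k k ≥ a`, for `k ∉ S` the second is at least `B k k ≥ b`, so
`cut S (A * B) ≥ a * cut S B + b * cut S A`. The diagonal of a product of `ℓ` such matrices
is at least `η ^ ℓ`, so peeling off the first factor of `A₁ (A₂ ⋯ A_m)` and inducting on `m`
gives `cut S (A₁ ⋯ A_m) ≥ η ^ (m - 1) * ∑ₖ cut S Aₖ`.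
-/

open Finset

namespace Matrix

variable {n R : Type*} [Fintype n] [DecidableEq n] [CommSemiring R]

def cut (S : Finset n) (M : Matrix n n R) : R := ∑ i ∈ S, ∑ j ∈ Sᶜ, M i j

lemma cut_sum {ι : Type*} (S : Finset n) (s : Finset ι) (M : ι → Matrix n n R) :
    cut S (∑ k ∈ s, M k) = ∑ k ∈ s, cut S (M k) := by
  simp only [cut, Matrix.sum_apply]
  exact sum_comm_cycle

lemma cut_mul (S : Finset n) (A B : Matrix n n R) :
    cut S (A * B) = ∑ k, (∑ i ∈ S, A i k) * ∑ j ∈ Sᶜ, B k j := by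
  simp only [cut, mul_apply, sum_mul_sum]
  exact sum_comm_cycle

variable [PartialOrder R] [IsOrderedRing R]

lemma mul_cut_add_mul_cut_le_cut_mul (S : Finset n) {a b : R} {A B : Matrix n n R}
    (hA : ∀ i j, 0 ≤ A i j) (hB : ∀ i j, 0 ≤ B i j)
    (hAd : ∀ i, a ≤ A i i) (hBd : ∀ i, b ≤ B i i) :
    a * cut S B + b * cut S A ≤ cut S (A * B) := by
  have hcutA : cut S A = ∑ k ∈ Sᶜ, ∑ i ∈ S, A i k := sum_comm
  rw [cut_mul, ← sum_add_sum_compl S, hcutA, cut, mul_sum, mul_sum]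
  refine add_le_add (sum_le_sum fun k hk => ?_) (sum_le_sum fun k hk => ?_)
  · exact mul_le_mul_of_nonneg_right ((hAd k).trans (single_le_sum (fun i _ => hA i k) hk))
      (sum_nonneg fun j _ => hB k j)
  · rw [mul_comm]
    exact mul_le_mul_of_nonneg_left ((hBd k).trans (single_le_sum (fun j _ => hB k j) hk))
      (sum_nonneg fun i _ => hA i k)

lemma list_prod_nonneg {L : List (Matrix n n R)} (hL : ∀ M ∈ L, ∀ i j, 0 ≤ M i j) :
    ∀ i j, 0 ≤ L.prod i j :=
  L.prod_induction (fun M => ∀ i j, 0 ≤ M i j)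
    (fun A B hA hB i j => sum_nonneg fun k _ => mul_nonneg (hA i k) (hB k j))
    (fun i j => by by_cases h : i = j <;> simp [one_apply, h]) hL

lemma pow_length_le_list_prod_diag {η : R} (hη : 0 ≤ η) {L : List (Matrix n n R)}
    (hL : ∀ M ∈ L, ∀ i j, 0 ≤ M i j) (hd : ∀ M ∈ L, ∀ i, η ≤ M i i) (i : n) :
    η ^ L.length ≤ L.prod i i := by
  induction L with
  | nil => simp
  | cons A L ih =>
    have hL' : ∀ M ∈ L, ∀ i j, 0 ≤ M i j := fun M hM => hL M (by simp [hM])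
    have hA : ∀ i j, 0 ≤ A i j := hL A (by simp)
    calc η ^ (A :: L).length = η * η ^ L.length := pow_succ' η _
      _ ≤ A i i * L.prod i i :=
        mul_le_mul (hd A (by simp) i) (ih hL' (fun M hM => hd M (by simp [hM]))) (by positivity)
          (hη.trans (hd A (by simp) i))
      _ ≤ ∑ k, A i k * L.prod k i :=
        single_le_sum (fun k _ => mul_nonneg (hA i k) (list_prod_nonneg hL' k i)) (mem_univ i)

lemma pow_length_mul_sum_cut_le_cut_prod (S : Finset n) {η : R} (hη : 0 ≤ η)
    (A : Matrix n n R) (L : List (Matrix n n R))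
    (hL : ∀ M ∈ A :: L, ∀ i j, 0 ≤ M i j) (hd : ∀ M ∈ A :: L, ∀ i, η ≤ M i i) :
    η ^ L.length * ((A :: L).map (cut S)).sum ≤ cut S (A :: L).prod := by
  induction L generalizing A with
  | nil => simp
  | cons B L ih =>
    have hBL : ∀ M ∈ B :: L, ∀ i j, 0 ≤ M i j := fun M hM => hL M (by simp [hM])
    have hdBL : ∀ M ∈ B :: L, ∀ i, η ≤ M i i := fun M hM => hd M (by simp [hM])
    have hstep := mul_cut_add_mul_cut_le_cut_mul S (hL A (by simp)) (list_prod_nonneg hBL)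
      (hd A (by simp)) (pow_length_le_list_prod_diag hη hBL hdBL)
    calc η ^ (B :: L).length * ((A :: B :: L).map (cut S)).sum
        = η * (η ^ L.length * ((B :: L).map (cut S)).sum)
          + η ^ (B :: L).length * cut S A := by
            simp only [List.map_cons, List.sum_cons, List.length_cons, pow_succ]
            ring
      _ ≤ η * cut S (B :: L).prod + η ^ (B :: L).length * cut S A := by
        gcongr
        exact ih B hBL hdBL
      _ ≤ cut S (A :: B :: L).prod := hstep

end Matrix

theorem stmt6_general (N m : ℕ) (hm : 1 ≤ m)
    (η : ℝ) (hη0 : 0 < η)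
    (A : Fin m → Matrix (Fin N) (Fin N) ℝ)
    (hnonneg : ∀ k i j, 0 ≤ A k i j)
    (hdiag : ∀ k i, η ≤ A k i i)
    (S : Finset (Fin N)) :
    η ^ (m - 1) * ∑ i ∈ S, ∑ j ∈ Sᶜ, (∑ k, A k) i j ≤
      ∑ i ∈ S, ∑ j ∈ Sᶜ, (List.ofFn A).prod i j := by
  obtain ⟨m, rfl⟩ : ∃ m', m = m' + 1 := ⟨m - 1, by omega⟩
  have key := Matrix.pow_length_mul_sum_cut_le_cut_prod S hη0.le
    (A 0) (List.ofFn fun k => A k.succ)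
    (by simpa [← List.ofFn_succ] using fun k => hnonneg k)
    (by simpa [← List.ofFn_succ] using fun k => hdiag k)
  rw [← List.ofFn_succ, List.length_ofFn] at key
  change η ^ (m + 1 - 1) * Matrix.cut S (∑ k, A k) ≤ Matrix.cut S (List.ofFn A).prod
  rw [Matrix.cut_sum]
  simpa [List.map_ofFn, List.sum_ofFn, Fin.sum_univ_succ] using key

theorem stmt6 (N m : ℕ) (hN : 2 ≤ N) (hm : 1 ≤ m)
    (η : ℝ) (hη0 : 0 < η) (hη1 : η < 1)
    (A : Fin m → Matrix (Fin N) (Fin N) ℝ)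
    (hnonneg : ∀ k i j, 0 ≤ A k i j)
    (hrow : ∀ k i, ∑ j, A k i j = 1)
    (hdiag : ∀ k i, η ≤ A k i i)
    (S : Finset (Fin N)) (hS : S.Nonempty) (hS' : S ≠ Finset.univ) :
    η ^ (m - 1) * ∑ i ∈ S, ∑ j ∈ Sᶜ, (∑ k, A k) i j ≤
      ∑ i ∈ S, ∑ j ∈ Sᶜ, (List.ofFn A).prod i j :=
  stmt6_general N m hm η hη0 A hnonneg hdiag S
end

section
/- Let A_1, A_2, …, A_m be N×N row-stochastic matrices, B_m = A_1 A_2 ⋯ A_m and C_m = A_1 + ⋯ + A_m. Then for every nonempty proper subset S of {1,…,N}, ∑_{i∈S, j∉S} (B_m)_{ij} ≤ (N − 1) ∑_{i∈S, j∉S} (C_m)_{ij}. -/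
/-!
Let `cut S M` be the total weight `M` sends from `S` to `Sᶜ`. For row-stochastic `B` and `Q`,
splitting the middle index of `(B Q)_{ij}` according to whether it lies in `S` gives
`cut S (B Q) ≤ cut S B + |S| · cut S Q`: a step that stays in `S` and then crosses is charged to
`Q` once for every starting row in `S`, and a step that leaves `S` is charged to `B`. Iterating
over the factors gives `cut S B_m ≤ |S| · cut S C_m`, and `|S| ≤ N - 1` since `S` is proper.
-/

open Finset Matrix

namespace Matrix

variable {R n : Type*} [Fintype n] [DecidableEq n]

def cutWeight [AddCommMonoid R] (S : Finset n) (M : Matrix n n R) : R :=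
  ∑ i ∈ S, ∑ j ∈ Sᶜ, M i j

section AddCommMonoid

variable [AddCommMonoid R] (S : Finset n)

theorem cutWeight_sum {ι : Type*} (s : Finset ι) (A : ι → Matrix n n R) :
    cutWeight S (∑ k ∈ s, A k) = ∑ k ∈ s, cutWeight S (A k) := by
  simp only [cutWeight, Matrix.sum_apply]
  exact (sum_congr rfl fun i _ => sum_comm).trans sum_comm

theorem cutWeight_nonneg [PartialOrder R] [IsOrderedAddMonoid R] {M : Matrix n n R}
    (hM : ∀ i j, 0 ≤ M i j) : 0 ≤ cutWeight S M :=
  sum_nonneg fun i _ => sum_nonneg fun j _ => hM i j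

end AddCommMonoid

variable [Semiring R] (S : Finset n)

theorem cutWeight_one : cutWeight S (1 : Matrix n n R) = 0 :=
  sum_eq_zero fun _ hi => sum_eq_zero fun _ hj =>
    one_apply_ne fun hij => mem_compl.1 hj (hij ▸ hi)

variable [PartialOrder R] [IsOrderedRing R]

theorem cutWeight_mul_le {B Q : Matrix n n R} (hB : B ∈ rowStochastic R n)
    (hQ : Q ∈ rowStochastic R n) :
    cutWeight S (B * Q) ≤ cutWeight S B + #S * cutWeight S Q := by
  set q : n → R := fun l => ∑ j ∈ Sᶜ, Q l j
  have hq_nonneg (l : n) : 0 ≤ q l := sum_nonneg fun j _ => nonneg_of_mem_rowStochastic hQ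
  have hq_le_one (l : n) : q l ≤ 1 :=
    (sum_le_sum_of_subset_of_nonneg (subset_univ _) fun j _ _ =>
      nonneg_of_mem_rowStochastic hQ).trans_eq (sum_row_of_mem_rowStochastic hQ l)
  calc cutWeight S (B * Q) = ∑ i ∈ S, (∑ l ∈ S, B i l * q l + ∑ l ∈ Sᶜ, B i l * q l) := by
        refine sum_congr rfl fun i _ => ?_
        simp only [mul_apply, q, mul_sum]
        rw [sum_comm, sum_add_sum_compl]
    _ ≤ ∑ i ∈ S, (∑ l ∈ S, q l + ∑ l ∈ Sᶜ, B i l) := by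
        gcongr with i _ l _ l _
        · exact mul_le_of_le_one_left (hq_nonneg l) (le_one_of_mem_rowStochastic hB)
        · exact mul_le_of_le_one_right (nonneg_of_mem_rowStochastic hB) (hq_le_one l)
    _ = cutWeight S B + #S * cutWeight S Q := by
        rw [sum_add_distrib, sum_const, nsmul_eq_mul, add_comm]
        rfl

theorem cutWeight_list_prod_le (L : List (Matrix n n R))
    (hL : ∀ M ∈ L, M ∈ rowStochastic R n) :
    cutWeight S L.prod ≤ #S * (L.map (cutWeight S)).sum := by
  induction L using List.reverseRecOn with
  | nil => simp [cutWeight_one]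
  | append_singleton L Q ih =>
    have hL' : ∀ M ∈ L, M ∈ rowStochastic R n := fun M hM => hL M (by simp [hM])
    rw [List.prod_append, List.prod_singleton, List.map_append, List.sum_append,
      List.map_singleton, List.sum_singleton, mul_add]
    calc cutWeight S (L.prod * Q) ≤ cutWeight S L.prod + #S * cutWeight S Q :=
          cutWeight_mul_le S (Submonoid.list_prod_mem _ hL') (hL Q (by simp))
      _ ≤ _ := by gcongr; exact ih hL'

end Matrix

theorem stmt7_general (N m : ℕ)
    (A : Fin m → Matrix (Fin N) (Fin N) ℝ)
    (hnonneg : ∀ k i j, 0 ≤ A k i j)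
    (hrow : ∀ k i, ∑ j, A k i j = 1)
    (S : Finset (Fin N)) (hS' : S ≠ Finset.univ) :
    ∑ i ∈ S, ∑ j ∈ Sᶜ, (List.ofFn A).prod i j ≤
      ((N : ℝ) - 1) * ∑ i ∈ S, ∑ j ∈ Sᶜ, (∑ k, A k) i j := by
  have hA (k : Fin m) : A k ∈ rowStochastic ℝ (Fin N) :=
    mem_rowStochastic_iff_sum.2 ⟨hnonneg k, hrow k⟩
  have hcard : (#S : ℝ) ≤ N - 1 := by
    have := (card_lt_iff_ne_univ S).2 hS'
    rw [Fintype.card_fin] at this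
    rw [le_sub_iff_add_le]
    exact_mod_cast this
  calc cutWeight S (List.ofFn A).prod
      ≤ #S * ((List.ofFn A).map (cutWeight S)).sum :=
        cutWeight_list_prod_le S _ (by simpa [List.mem_ofFn] using hA)
    _ ≤ (N - 1) * ∑ k, cutWeight S (A k) := by
        simp only [List.map_ofFn, List.sum_ofFn, Function.comp_apply]
        gcongr
        exact sum_nonneg fun k _ => cutWeight_nonneg S (hA k).1
    _ = (N - 1) * cutWeight S (∑ k, A k) := by rw [cutWeight_sum]

theorem stmt7 (N m : ℕ) (hN : 2 ≤ N) (hm : 1 ≤ m)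
    (A : Fin m → Matrix (Fin N) (Fin N) ℝ)
    (hnonneg : ∀ k i j, 0 ≤ A k i j)
    (hrow : ∀ k i, ∑ j, A k i j = 1)
    (S : Finset (Fin N)) (hS : S.Nonempty) (hS' : S ≠ Finset.univ) :
    ∑ i ∈ S, ∑ j ∈ Sᶜ, (List.ofFn A).prod i j ≤
      ((N : ℝ) - 1) * ∑ i ∈ S, ∑ j ∈ Sᶜ, (∑ k, A k) i j :=
  stmt7_general N m A hnonneg hrow S hS'
end

section
/- Suppose Assumptions 1 and 3 hold. Fix an initial time t0 ≥ 0 and define B(t) = A((t+1)L − 1 + t0) ⋯ A(tL + 1 + t0) A(tL + t0) for each t ≥ 0, with entries b_ij(t). Then b_ii(t) ≥ η^L for all i ∈ V and t ≥ 0, and each B(t) satisfies the cut-balance condition: for every nonempty proper subset S of V, ∑_{i∉S, j∈S} b_ij(t) ≤ M* ∑_{i∈S, j∉S} b_ij(t), where M* = (N−1) K η^{−L+1}. -/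
open Filter Finset

/-- `Bmat A L t0 t = A((t+1)L − 1 + t0) ⋯ A(tL + 1 + t0) A(tL + t0)`. -/
def Bmat {N : ℕ} (A : ℕ → Matrix (Fin N) (Fin N) ℝ) (L t0 t : ℕ) :
    Matrix (Fin N) (Fin N) ℝ :=
  (List.ofFn (fun u : Fin L => A ((t + 1) * L - 1 - (u : ℕ) + t0))).prod

/-!
Write `flow_S(M) = ∑_{i ∉ S, j ∈ S} M i j`. Splitting a product `P Q` of row-stochastic matrices
according to where the walk is between `P` and `Q` gives
`flow_S(P Q) ≤ flow_S(P) + #Sᶜ · flow_S(Q)`, since the rows of `Q` sum to `1` and the columns of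
`P` sum to at most `#Sᶜ` over `Sᶜ`; iterating, the flow of `B` into `S` is at most
`#Sᶜ ≤ N - 1` times the total flow of the factors into `S`. Conversely, a step `i → j` (`i ≠ j`)
of one factor survives in `B` with at least `η^(L-1)` times its weight, because every other factor
keeps the walk at `i` or at `j` through its diagonal. So the flow of `B` out of `S` is at least
`η^(L-1)` times the total flow of the factors out of `S`, and the balance condition of the
window passes to `B` with constant `(N - 1) K / η^(L-1)`.
-/

namespace Matrix
variable {n : Type*}

def blockSum (S T : Finset n) (M : Matrix n n ℝ) : ℝ :=
  ∑ i ∈ S, ∑ j ∈ T, M i j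

theorem blockSum_nonneg {S T : Finset n} {M : Matrix n n ℝ} (hM : ∀ i j, 0 ≤ M i j) :
    0 ≤ blockSum S T M :=
  sum_nonneg fun i _ => sum_nonneg fun j _ => hM i j

theorem blockSum_one [DecidableEq n] {S T : Finset n} (hST : Disjoint S T) :
    blockSum S T (1 : Matrix n n ℝ) = 0 :=
  sum_eq_zero fun _ hi => sum_eq_zero fun _ hj =>
    one_apply_ne (disjoint_left.mp hST hi <| · ▸ hj)

variable [Fintype n]

theorem mul_apply_diag_mul_le {P Q : Matrix n n ℝ} (hP : ∀ i j, 0 ≤ P i j)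
    (hQ : ∀ i j, 0 ≤ Q i j) (i : n) : P i i * Q i i ≤ (P * Q) i i :=
  single_le_sum (fun k _ => mul_nonneg (hP i k) (hQ k i)) (mem_univ i)

theorem mul_apply_add_le [DecidableEq n] {P Q : Matrix n n ℝ} (hP : ∀ i j, 0 ≤ P i j)
    (hQ : ∀ i j, 0 ≤ Q i j) {i j : n} (hij : i ≠ j) :
    P i i * Q i j + P i j * Q j j ≤ (P * Q) i j := by
  rw [← sum_pair (f := fun k => P i k * Q k j) hij]
  exact sum_le_sum_of_subset_of_nonneg (subset_univ _)
    fun k _ _ => mul_nonneg (hP i k) (hQ k j)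

variable [DecidableEq n]

theorem blockSum_compl_mul_le (S : Finset n) {P Q : Matrix n n ℝ}
    (hP : P ∈ rowStochastic ℝ n) (hQ : Q ∈ rowStochastic ℝ n) :
    blockSum Sᶜ S (P * Q) ≤ blockSum Sᶜ S P + #Sᶜ * blockSum Sᶜ S Q := by
  have hsplit : blockSum Sᶜ S (P * Q) = ∑ k, (∑ i ∈ Sᶜ, P i k) * ∑ j ∈ S, Q k j := by
    simp only [blockSum, mul_apply, sum_mul_sum]
    calc ∑ i ∈ Sᶜ, ∑ j ∈ S, ∑ k, P i k * Q k j = ∑ i ∈ Sᶜ, ∑ k, ∑ j ∈ S, P i k * Q k j :=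
          sum_congr rfl fun _ _ => sum_comm
      _ = _ := sum_comm
  have hin : ∀ k ∈ S, (∑ i ∈ Sᶜ, P i k) * ∑ j ∈ S, Q k j ≤ ∑ i ∈ Sᶜ, P i k := fun k _ =>
    mul_le_of_le_one_right (sum_nonneg fun i _ => nonneg_of_mem_rowStochastic hP)
      (sum_row_of_mem_rowStochastic hQ k ▸
        sum_le_sum_of_subset_of_nonneg (subset_univ S) fun j _ _ => nonneg_of_mem_rowStochastic hQ)
  have hout : ∀ k ∈ Sᶜ, (∑ i ∈ Sᶜ, P i k) * ∑ j ∈ S, Q k j ≤ #Sᶜ * ∑ j ∈ S, Q k j := fun k _ =>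
    mul_le_mul_of_nonneg_right
      (by simpa using sum_le_card_nsmul Sᶜ (P · k) 1 fun i _ => le_one_of_mem_rowStochastic hP)
      (sum_nonneg fun j _ => nonneg_of_mem_rowStochastic hQ)
  calc blockSum Sᶜ S (P * Q)
      = ∑ k ∈ S, (∑ i ∈ Sᶜ, P i k) * ∑ j ∈ S, Q k j
        + ∑ k ∈ Sᶜ, (∑ i ∈ Sᶜ, P i k) * ∑ j ∈ S, Q k j := by rw [hsplit, sum_add_sum_compl]
    _ ≤ ∑ k ∈ S, ∑ i ∈ Sᶜ, P i k + ∑ k ∈ Sᶜ, #Sᶜ * ∑ j ∈ S, Q k j :=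
        add_le_add (sum_le_sum hin) (sum_le_sum hout)
    _ = blockSum Sᶜ S P + #Sᶜ * blockSum Sᶜ S Q := by rw [blockSum, blockSum, sum_comm, mul_sum]

theorem blockSum_compl_list_prod_le (S : Finset n) {l : List (Matrix n n ℝ)}
    (hl : ∀ M ∈ l, M ∈ rowStochastic ℝ n) :
    blockSum Sᶜ S l.prod ≤ #Sᶜ * (l.map (blockSum Sᶜ S)).sum := by
  induction l using List.reverseRecOn with
  | nil => simp [blockSum_one (disjoint_compl_left (a := S))]
  | append_singleton l M ih =>
    have hl' : ∀ M' ∈ l, M' ∈ rowStochastic ℝ n := fun M' hM' => hl M' (by simp [hM'])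
    have hstep := blockSum_compl_mul_le S ((rowStochastic ℝ n).list_prod_mem hl') (hl M (by simp))
    rw [List.prod_append, List.prod_singleton, List.map_append, List.sum_append, mul_add]
    simpa using hstep.trans (add_le_add_left (ih hl') _)

theorem pow_length_le_list_prod_apply_self {η : ℝ} (hη : 0 ≤ η) {l : List (Matrix n n ℝ)}
    (hl : ∀ M ∈ l, M ∈ rowStochastic ℝ n) (hd : ∀ M ∈ l, ∀ i, η ≤ M i i) (i : n) :
    η ^ l.length ≤ l.prod i i := by
  induction l with
  | nil => simp
  | cons M l ih =>
    have hM := hl M List.mem_cons_self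
    have hl' : ∀ M' ∈ l, M' ∈ rowStochastic ℝ n := fun M' hM' => hl M' (List.mem_cons_of_mem _ hM')
    have ih := ih hl' fun M' hM' => hd M' (List.mem_cons_of_mem _ hM')
    calc η ^ (M :: l).length = η * η ^ l.length := pow_succ' η _
      _ ≤ M i i * l.prod i i :=
          mul_le_mul (hd M List.mem_cons_self i) ih (by positivity) (nonneg_of_mem_rowStochastic hM)
      _ ≤ (M :: l).prod i i :=
          mul_apply_diag_mul_le hM.1 ((rowStochastic ℝ n).list_prod_mem hl').1 i

theorem mul_blockSum_add_mul_blockSum_le {S T : Finset n} (hST : Disjoint S T)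
    {P Q : Matrix n n ℝ} (hP : ∀ i j, 0 ≤ P i j) (hQ : ∀ i j, 0 ≤ Q i j) {a b : ℝ}
    (ha : ∀ i, a ≤ P i i) (hb : ∀ j, b ≤ Q j j) :
    a * blockSum S T Q + b * blockSum S T P ≤ blockSum S T (P * Q) := by
  simp only [blockSum, mul_sum, ← sum_add_distrib]
  refine sum_le_sum fun i hi => sum_le_sum fun j hj => ?_
  calc a * Q i j + b * P i j ≤ P i i * Q i j + P i j * Q j j := by
        rw [mul_comm b]
        exact add_le_add (mul_le_mul_of_nonneg_right (ha i) (hQ i j))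
          (mul_le_mul_of_nonneg_left (hb j) (hP i j))
    _ ≤ (P * Q) i j := mul_apply_add_le hP hQ (disjoint_left.mp hST hi <| · ▸ hj)

theorem pow_mul_sum_blockSum_le_blockSum_list_prod {η : ℝ} (hη : 0 ≤ η) {S T : Finset n}
    (hST : Disjoint S T) {l : List (Matrix n n ℝ)} (hl : ∀ M ∈ l, M ∈ rowStochastic ℝ n)
    (hd : ∀ M ∈ l, ∀ i, η ≤ M i i) :
    η ^ (l.length - 1) * (l.map (blockSum S T)).sum ≤ blockSum S T l.prod := by
  induction l with
  | nil => simp [blockSum_one hST]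
  | cons M l ih =>
    rcases l with _ | ⟨M', l⟩
    · simp
    have hl' : ∀ M ∈ M' :: l, M ∈ rowStochastic ℝ n :=
      fun M hM => hl M (List.mem_cons_of_mem _ hM)
    have hd' : ∀ M ∈ M' :: l, ∀ i, η ≤ M i i := fun M hM => hd M (List.mem_cons_of_mem _ hM)
    have hstep := mul_blockSum_add_mul_blockSum_le hST (hl M List.mem_cons_self).1
      ((rowStochastic ℝ n).list_prod_mem hl').1 (hd M List.mem_cons_self)
      (pow_length_le_list_prod_apply_self hη hl' hd')
    have ih := mul_le_mul_of_nonneg_left (ih hl' hd') hη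
    simp only [List.length_cons, Nat.add_sub_cancel, List.map_cons, List.sum_cons,
      List.prod_cons] at ih hstep ⊢
    calc η ^ (l.length + 1) * (blockSum S T M + (blockSum S T M' + (l.map (blockSum S T)).sum))
        = η * (η ^ l.length * (blockSum S T M' + (l.map (blockSum S T)).sum))
          + η ^ (l.length + 1) * blockSum S T M := by ring
      _ ≤ _ := (add_le_add_left ih _).trans hstep

end Matrix

open Matrix

section Bmat

variable {N : ℕ} (A : ℕ → Matrix (Fin N) (Fin N) ℝ) (L t0 t : ℕ)

def Bfactors : List (Matrix (Fin N) (Fin N) ℝ) :=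
  List.ofFn fun u : Fin L => A ((t + 1) * L - 1 - (u : ℕ) + t0)

theorem Bmat_eq_prod_Bfactors : Bmat A L t0 t = (Bfactors A L t0 t).prod := rfl

theorem length_Bfactors : (Bfactors A L t0 t).length = L := List.length_ofFn

theorem sum_map_Bfactors (g : Matrix (Fin N) (Fin N) ℝ → ℝ) :
    ((Bfactors A L t0 t).map g).sum = ∑ s ∈ Ico (t * L + t0) (t * L + t0 + L), g (A s) := by
  rw [Bfactors, List.map_ofFn, List.sum_ofFn, sum_Ico_eq_sum_range, Nat.add_sub_cancel_left,
    ← sum_range_reflect, ← Fin.sum_univ_eq_sum_range (fun u => g (A (t * L + t0 + (L - 1 - u))))]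
  refine sum_congr rfl fun u _ => congrArg (g ∘ A) ?_
  have := u.isLt
  rw [add_one_mul]
  omega

theorem forall_mem_Bfactors {p : Matrix (Fin N) (Fin N) ℝ → Prop} (hp : ∀ s, p (A s)) :
    ∀ M ∈ Bfactors A L t0 t, p M := by
  simpa only [Bfactors, List.forall_mem_ofFn_iff] using fun _ => hp _

variable {A} (hA : ∀ s, A s ∈ rowStochastic ℝ (Fin N))
include hA

theorem pow_le_Bmat_apply_self {η : ℝ} (hη : 0 ≤ η) (hd : ∀ s i, η ≤ A s i i) (i : Fin N) :
    η ^ L ≤ Bmat A L t0 t i i := by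
  have h := pow_length_le_list_prod_apply_self hη
    (forall_mem_Bfactors A L t0 t hA) (forall_mem_Bfactors A L t0 t hd) i
  rwa [length_Bfactors] at h

theorem blockSum_compl_Bmat_le (S : Finset (Fin N)) :
    blockSum Sᶜ S (Bmat A L t0 t) ≤
      #Sᶜ * ∑ s ∈ Ico (t * L + t0) (t * L + t0 + L), blockSum Sᶜ S (A s) := by
  have h := blockSum_compl_list_prod_le S (forall_mem_Bfactors A L t0 t hA)
  rwa [sum_map_Bfactors] at h

theorem pow_mul_sum_blockSum_le_blockSum_Bmat {η : ℝ} (hη : 0 ≤ η) (hd : ∀ s i, η ≤ A s i i)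
    {S T : Finset (Fin N)} (hST : Disjoint S T) :
    η ^ (L - 1) * ∑ s ∈ Ico (t * L + t0) (t * L + t0 + L), blockSum S T (A s) ≤
      blockSum S T (Bmat A L t0 t) := by
  have h := pow_mul_sum_blockSum_le_blockSum_list_prod hη hST (forall_mem_Bfactors A L t0 t hA)
    (forall_mem_Bfactors A L t0 t hd)
  rwa [length_Bfactors, sum_map_Bfactors] at h

end Bmat

theorem stmt8_general (N : ℕ) (A : ℕ → Matrix (Fin N) (Fin N) ℝ)
    (η : ℝ) (hη0 : 0 < η)
    (hnonneg : ∀ t i j, 0 ≤ A t i j)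
    (hrow : ∀ t i, ∑ j, A t i j = 1)
    (hdiag : ∀ t i, η ≤ A t i i)
    (L : ℕ) (K : ℝ) (hK : 1 ≤ K)
    (hbal : ∀ S : Finset (Fin N), S.Nonempty → S ≠ Finset.univ → ∀ s : ℕ,
      ∑ t ∈ Finset.Ico s (s + L), ∑ i ∈ Sᶜ, ∑ j ∈ S, A t i j ≤
        K * ∑ t ∈ Finset.Ico s (s + L), ∑ i ∈ S, ∑ j ∈ Sᶜ, A t i j)
    (t0 : ℕ) :
    (∀ t : ℕ, ∀ i : Fin N, η ^ L ≤ Bmat A L t0 t i i) ∧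
      (∀ t : ℕ, ∀ S : Finset (Fin N), S.Nonempty → S ≠ Finset.univ →
        ∑ i ∈ Sᶜ, ∑ j ∈ S, Bmat A L t0 t i j ≤
          ((N : ℝ) - 1) * K / η ^ (L - 1) * ∑ i ∈ S, ∑ j ∈ Sᶜ, Bmat A L t0 t i j) := by
  have hA : ∀ s, A s ∈ rowStochastic ℝ (Fin N) :=
    fun s => mem_rowStochastic_iff_sum.mpr ⟨hnonneg s, hrow s⟩
  refine ⟨fun t => pow_le_Bmat_apply_self L t0 t hA hη0.le hdiag, fun t S hS hSu => ?_⟩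
  have hcard : (#Sᶜ : ℝ) ≤ N - 1 := by
    have := (card_compl_lt_iff_nonempty S).mpr hS
    rw [Fintype.card_fin] at this
    rw [le_sub_iff_add_le]
    exact_mod_cast this
  have hN1 : (0 : ℝ) ≤ N - 1 := (Nat.cast_nonneg _).trans hcard
  set window := Ico (t * L + t0) (t * L + t0 + L)
  change blockSum Sᶜ S (Bmat A L t0 t) ≤ _ * blockSum S Sᶜ (Bmat A L t0 t)
  calc blockSum Sᶜ S (Bmat A L t0 t)
      ≤ (N - 1) * ∑ s ∈ window, blockSum Sᶜ S (A s) :=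
        (blockSum_compl_Bmat_le L t0 t hA S).trans <| mul_le_mul_of_nonneg_right hcard <|
          sum_nonneg fun s _ => blockSum_nonneg (hnonneg s)
    _ ≤ (N - 1) * (K * ∑ s ∈ window, blockSum S Sᶜ (A s)) :=
        mul_le_mul_of_nonneg_left (hbal S hS hSu _) hN1
    _ = (N - 1) * K / η ^ (L - 1) * (η ^ (L - 1) * ∑ s ∈ window, blockSum S Sᶜ (A s)) := by
        field_simp
    _ ≤ (N - 1) * K / η ^ (L - 1) * blockSum S Sᶜ (Bmat A L t0 t) :=
        mul_le_mul_of_nonneg_left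
          (pow_mul_sum_blockSum_le_blockSum_Bmat L t0 t hA hη0.le hdiag disjoint_compl_right)
          (by positivity)

theorem stmt8 (N : ℕ) (hN : 2 ≤ N) (A : ℕ → Matrix (Fin N) (Fin N) ℝ)
    (η : ℝ) (hη0 : 0 < η) (hη1 : η < 1)
    (hnonneg : ∀ t i j, 0 ≤ A t i j)
    (hrow : ∀ t i, ∑ j, A t i j = 1)
    (hdiag : ∀ t i, η ≤ A t i i)
    (L : ℕ) (hL : 1 ≤ L) (K : ℝ) (hK : 1 ≤ K)
    (hbal : ∀ S : Finset (Fin N), S.Nonempty → S ≠ Finset.univ → ∀ s : ℕ,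
      ∑ t ∈ Finset.Ico s (s + L), ∑ i ∈ Sᶜ, ∑ j ∈ S, A t i j ≤
        K * ∑ t ∈ Finset.Ico s (s + L), ∑ i ∈ S, ∑ j ∈ Sᶜ, A t i j)
    (t0 : ℕ) :
    (∀ t : ℕ, ∀ i : Fin N, η ^ L ≤ Bmat A L t0 t i i) ∧
      (∀ t : ℕ, ∀ S : Finset (Fin N), S.Nonempty → S ≠ Finset.univ →
        ∑ i ∈ Sᶜ, ∑ j ∈ S, Bmat A L t0 t i j ≤
          ((N : ℝ) - 1) * K / η ^ (L - 1) * ∑ i ∈ S, ∑ j ∈ Sᶜ, Bmat A L t0 t i j) :=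
  stmt8_general N A η hη0 hnonneg hrow hdiag L K hK hbal t0
end

section
/- Suppose Assumptions 1 and 3 hold. Fix an initial time t0 ≥ 0 and define B(t) = A((t+1)L − 1 + t0) ⋯ A(tL + 1 + t0) A(tL + t0) for each t ≥ 0, with entries b_ij(t). Let G_p' = (V, E_p') be the directed graph where (j,i) ∈ E_p' if and only if ∑_{t=0}^∞ b_ij(t) = ∞. Then the persistent graph G_p contains a directed spanning tree if and only if G_p' contains a directed spanning tree. -/
open Filter Finset

/-!
A persistent arc `(j, i)` of `A` gives a persistent arc of `B`, because each block product
dominates `η ^ (L - 1)` times each of its factors (the diagonals stay above `η`). Conversely,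
if `(j, i)` is persistent for `B` but `i` is not reachable from `j` in `G_p`, let `C` be the set
of nodes reachable from `j`. Every arc leaving `C` is summable, and the probability that a product
of stochastic matrices carries mass from `i ∉ C` into `C` is at most the total weight of the arcs
leaving `C` along the way, so `∑ₜ b_ij(t)` would be finite.
-/

open Matrix

section StochasticProducts

variable {R n : Type*} [CommSemiring R] [PartialOrder R] [IsOrderedRing R] [Fintype n]

theorem Matrix.le_mul_apply_of_nonneg {m o : Type*} {P : Matrix m n R} {Q : Matrix n o R}
    (hP : ∀ i k, 0 ≤ P i k) (hQ : ∀ k j, 0 ≤ Q k j) (i : m) (k : n) (j : o) :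
    P i k * Q k j ≤ (P * Q) i j :=
  single_le_sum (f := fun k => P i k * Q k j) (fun k _ => mul_nonneg (hP i k) (hQ k j))
    (mem_univ k)

variable [DecidableEq n]

theorem Matrix.pow_length_le_list_prod_apply_self_s9 {η : R} (hη : 0 ≤ η)
    {l : List (Matrix n n R)} (hl : ∀ M ∈ l, M ∈ rowStochastic R n)
    (hdiag : ∀ M ∈ l, ∀ i, η ≤ M i i) (i : n) : η ^ l.length ≤ l.prod i i := by
  induction l with
  | nil => simp
  | cons M l ih =>
    have hM := hl M List.mem_cons_self
    have hP := (rowStochastic R n).list_prod_mem fun M' h => hl M' (List.mem_cons_of_mem _ h)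
    calc η ^ (M :: l).length = η * η ^ l.length := pow_succ' η _
      _ ≤ M i i * l.prod i i :=
          mul_le_mul (hdiag M List.mem_cons_self i)
            (ih (fun M' h => hl M' (List.mem_cons_of_mem _ h))
              (fun M' h => hdiag M' (List.mem_cons_of_mem _ h)))
            (pow_nonneg hη _) (hM.1 i i)
      _ ≤ (M :: l).prod i i := le_mul_apply_of_nonneg hM.1 hP.1 i i i

theorem Matrix.pow_mul_le_list_prod_apply {η : R} (hη : 0 ≤ η)
    {l : List (Matrix n n R)} (hl : ∀ M ∈ l, M ∈ rowStochastic R n)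
    (hdiag : ∀ M ∈ l, ∀ i, η ≤ M i i) {M : Matrix n n R} (hM : M ∈ l) (i j : n) :
    η ^ (l.length - 1) * M i j ≤ l.prod i j := by
  induction l with
  | nil => simp at hM
  | cons M' l ih =>
    have hM' := hl M' List.mem_cons_self
    have hl' : ∀ M ∈ l, M ∈ rowStochastic R n := fun M h => hl M (List.mem_cons_of_mem _ h)
    have hdiag' : ∀ M ∈ l, ∀ i, η ≤ M i i := fun M h => hdiag M (List.mem_cons_of_mem _ h)
    have hP := (rowStochastic R n).list_prod_mem hl'
    rw [List.prod_cons, List.length_cons, Nat.add_sub_cancel]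
    rcases List.mem_cons.1 hM with rfl | hMl
    · calc η ^ l.length * M i j ≤ M i j * l.prod j j := by
            rw [mul_comm]
            exact mul_le_mul_of_nonneg_left
              (pow_length_le_list_prod_apply_self_s9 hη hl' hdiag' j) (hM'.1 i j)
        _ ≤ (M * l.prod) i j := le_mul_apply_of_nonneg hM'.1 hP.1 i j j
    · obtain ⟨k, hk⟩ := Nat.exists_eq_add_one_of_ne_zero (List.length_pos_of_mem hMl).ne'
      calc η ^ l.length * M i j = η * (η ^ (l.length - 1) * M i j) := by
            rw [hk, Nat.add_sub_cancel, pow_succ', mul_assoc]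
        _ ≤ M' i i * l.prod i j :=
            mul_le_mul (hdiag M' List.mem_cons_self i) (ih hl' hdiag' hMl)
              (mul_nonneg (pow_nonneg hη _) ((hl M hM).1 i j)) (hM'.1 i i)
        _ ≤ (M' * l.prod) i j := le_mul_apply_of_nonneg hM'.1 hP.1 i i j

/-- The total weight `∑_{p ∉ C, q ∈ C} M p q` of the arcs `(q, p)` leaving `C`. -/
def Matrix.cutWeight_s9 (C : Finset n) (M : Matrix n n R) : R :=
  ∑ p ∈ Cᶜ, ∑ q ∈ C, M p q

theorem Matrix.cutWeight_nonneg_s9 (C : Finset n) {M : Matrix n n R} (hM : ∀ p q, 0 ≤ M p q) :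
    0 ≤ cutWeight_s9 C M :=
  sum_nonneg fun p _ => sum_nonneg fun q _ => hM p q

theorem Matrix.mulVec_le_one_of_mem_rowStochastic {M : Matrix n n R}
    (hM : M ∈ rowStochastic R n) {x : n → R} (hx : ∀ k, x k ≤ 1) (i : n) :
    (M *ᵥ x) i ≤ 1 :=
  calc (M *ᵥ x) i = ∑ k, M i k * x k := rfl
    _ ≤ ∑ k, M i k := sum_le_sum fun k _ => mul_le_of_le_one_right (hM.1 i k) (hx k)
    _ = 1 := sum_row_of_mem_rowStochastic hM i

theorem Matrix.mulVec_apply_le_cutWeight_add {M : Matrix n n R} (hM : M ∈ rowStochastic R n)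
    {C : Finset n} {x : n → R} {D : R} (hx0 : ∀ k, 0 ≤ x k) (hx1 : ∀ k, x k ≤ 1)
    (hxD : ∀ k ∉ C, x k ≤ D) {i : n} (hi : i ∉ C) :
    (M *ᵥ x) i ≤ cutWeight_s9 C M + D := by
  have hD : 0 ≤ D := (hx0 i).trans (hxD i hi)
  calc (M *ᵥ x) i = ∑ p ∈ C, M i p * x p + ∑ p ∈ Cᶜ, M i p * x p :=
        (sum_add_sum_compl C _).symm
    _ ≤ ∑ p ∈ C, M i p + (∑ p ∈ Cᶜ, M i p) * D := by
        rw [sum_mul]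
        gcongr with p _ p hp
        · exact mul_le_of_le_one_right (hM.1 i p) (hx1 p)
        · exact hM.1 i p
        · exact hxD p (mem_compl.1 hp)
    _ ≤ cutWeight_s9 C M + 1 * D := by
        gcongr
        · exact single_le_sum (f := fun p => ∑ q ∈ C, M p q)
            (fun p _ => sum_nonneg fun q _ => hM.1 p q) (mem_compl.2 hi)
        · rw [← sum_row_of_mem_rowStochastic hM i]
          exact sum_le_univ_sum_of_nonneg (hM.1 i)
    _ = cutWeight_s9 C M + D := by rw [one_mul]

theorem Matrix.list_prod_mulVec_le_sum_cutWeight {l : List (Matrix n n R)}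
    (hl : ∀ M ∈ l, M ∈ rowStochastic R n) {C : Finset n} {x : n → R} (hx0 : ∀ k, 0 ≤ x k)
    (hx1 : ∀ k, x k ≤ 1) (hxC : ∀ k ∉ C, x k = 0) {i : n} (hi : i ∉ C) :
    (l.prod *ᵥ x) i ≤ (l.map (cutWeight_s9 C)).sum := by
  induction l generalizing i with
  | nil => simp [hxC i hi]
  | cons M l ih =>
    have hl' : ∀ M ∈ l, M ∈ rowStochastic R n := fun M h => hl M (List.mem_cons_of_mem _ h)
    have hP := (rowStochastic R n).list_prod_mem hl'
    rw [List.prod_cons, ← mulVec_mulVec, List.map_cons, List.sum_cons]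
    exact mulVec_apply_le_cutWeight_add (hl M List.mem_cons_self)
      (nonneg_mulVec_of_mem_rowStochastic hP hx0) (mulVec_le_one_of_mem_rowStochastic hP hx1)
      (fun k hk => ih hl' hk) hi

theorem Matrix.list_prod_apply_le_sum_cutWeight {l : List (Matrix n n R)}
    (hl : ∀ M ∈ l, M ∈ rowStochastic R n) {C : Finset n} {i j : n} (hi : i ∉ C) (hj : j ∈ C) :
    l.prod i j ≤ (l.map (cutWeight_s9 C)).sum := by
  have h := list_prod_mulVec_le_sum_cutWeight hl (x := Pi.single j 1)
    (fun k => by by_cases hk : k = j <;> simp [hk])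
    (fun k => by by_cases hk : k = j <;> simp [hk])
    (fun k hk => Pi.single_eq_of_ne (ne_of_mem_of_not_mem hj hk).symm 1) hi
  rwa [mulVec_single_one] at h

end StochasticProducts

theorem Finset.sum_range_mul_eq_sum_range_sum {M : Type*} [AddCommMonoid M] (f : ℕ → M)
    (n L : ℕ) :
    ∑ s ∈ range (n * L), f s = ∑ t ∈ range n, ∑ v ∈ range L, f (t * L + v) := by
  induction n with
  | zero => simp
  | succ n ih => rw [Nat.succ_mul, sum_range_add, ih, sum_range_succ]

theorem HasDirectedSpanningTree.of_le_reflTransGen {N : ℕ} {r s : Fin N → Fin N → Prop}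
    (h : r ≤ Relation.ReflTransGen s) (hr : HasDirectedSpanningTree r) :
    HasDirectedSpanningTree s :=
  let ⟨root, hroot⟩ := hr
  ⟨root, fun i => Relation.reflTransGen_closed h _ _ (hroot i)⟩

section Blocks

variable {N : ℕ} {A : ℕ → Matrix (Fin N) (Fin N) ℝ}

theorem persistentArc_iff_not_summable {i j : Fin N} (hA : ∀ t, 0 ≤ A t i j) :
    PersistentArc A j i ↔ ¬Summable fun t => A t i j := by
  rw [summable_iff_not_tendsto_nat_atTop_of_nonneg hA, not_not]
  rfl

theorem bmat_eq_list_prod (L t0 t : ℕ) :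
    Bmat A L t0 t = (List.ofFn fun u : Fin L => A (t0 + (t * L + u.rev))).prod := by
  unfold Bmat
  congr 2
  funext u
  have hu := u.isLt
  have hL : (t + 1) * L = t * L + L := Nat.succ_mul t L
  rw [Fin.val_rev]
  congr 1
  omega

variable (hA : ∀ t, A t ∈ rowStochastic ℝ (Fin N))
include hA

theorem bmat_mem_rowStochastic (L t0 t : ℕ) : Bmat A L t0 t ∈ rowStochastic ℝ (Fin N) :=
  (rowStochastic ℝ (Fin N)).list_prod_mem <| by
    simp only [List.mem_ofFn]
    rintro _ ⟨u, rfl⟩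
    exact hA _

theorem pow_mul_le_bmat_apply {η : ℝ} (hη : 0 ≤ η) (hdiag : ∀ t i, η ≤ A t i i)
    {L v : ℕ} (hv : v < L) (t0 t : ℕ) (i j : Fin N) :
    η ^ (L - 1) * A (t0 + (t * L + v)) i j ≤ Bmat A L t0 t i j := by
  rw [bmat_eq_list_prod]
  have h := pow_mul_le_list_prod_apply hη (l := List.ofFn fun u : Fin L => A (t0 + (t * L + u.rev)))
    (by simp only [List.mem_ofFn]; rintro _ ⟨u, rfl⟩; exact hA _)
    (by simp only [List.mem_ofFn]; rintro _ ⟨u, rfl⟩; exact hdiag _)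
    (List.mem_ofFn.2 ⟨Fin.rev ⟨v, hv⟩, by rw [Fin.rev_rev]⟩) i j
  rwa [List.length_ofFn] at h

theorem bmat_apply_le_sum_cutWeight {C : Finset (Fin N)} {i j : Fin N} (hi : i ∉ C) (hj : j ∈ C)
    (L t0 t : ℕ) :
    Bmat A L t0 t i j ≤ ∑ v ∈ range L, cutWeight_s9 C (A (t0 + (t * L + v))) := by
  rw [bmat_eq_list_prod]
  refine (list_prod_apply_le_sum_cutWeight
    (by simp only [List.mem_ofFn]; rintro _ ⟨u, rfl⟩; exact hA _) hi hj).trans_eq ?_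
  rw [List.map_ofFn, List.sum_ofFn,
    ← Fin.sum_univ_eq_sum_range (fun v => cutWeight_s9 C (A (t0 + (t * L + v))))]
  exact Equiv.sum_comp Fin.revPerm (fun u : Fin L => cutWeight_s9 C (A (t0 + (t * L + u))))

theorem PersistentArc.bmat {η : ℝ} (hη : 0 < η) (hdiag : ∀ t i, η ≤ A t i i) {L : ℕ}
    (hL : 0 < L) (t0 : ℕ) {i j : Fin N} (h : PersistentArc A j i) :
    PersistentArc (Bmat A L t0) j i := by
  have hblocks : ∀ n, η ^ (L - 1) * ∑ s ∈ range (n * L), A (t0 + s) i j ≤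
      L * ∑ t ∈ range n, Bmat A L t0 t i j := by
    intro n
    rw [sum_range_mul_eq_sum_range_sum, mul_sum, mul_sum]
    refine sum_le_sum fun t _ => ?_
    calc η ^ (L - 1) * ∑ v ∈ range L, A (t0 + (t * L + v)) i j
        ≤ ∑ v ∈ range L, Bmat A L t0 t i j := by
          rw [mul_sum]
          exact sum_le_sum fun v hv =>
            pow_mul_le_bmat_apply hA hη.le hdiag (mem_range.1 hv) t0 t i j
      _ = L * Bmat A L t0 t i j := by rw [sum_const, card_range, nsmul_eq_mul]
  have hshifted : Tendsto (fun n => ∑ s ∈ range (n * L), A (t0 + s) i j) atTop atTop := by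
    have hφ : Tendsto (fun n => t0 + n * L) atTop atTop :=
      tendsto_atTop_mono (fun n => le_add_left (Nat.le_mul_of_pos_right n hL)) tendsto_id
    refine (tendsto_atTop_add_const_left _ (-∑ s ∈ range t0, A s i j) (h.comp hφ)).congr
      fun n => ?_
    simp only [Function.comp_apply, sum_range_add, neg_add_cancel_left]
  exact (tendsto_const_mul_atTop_of_pos (Nat.cast_pos.2 hL)).1 <|
    tendsto_atTop_mono hblocks <| (tendsto_const_mul_atTop_of_pos (pow_pos hη _)).2 hshifted

theorem not_persistentArc_bmat_of_closed {C : Finset (Fin N)}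
    (hC : ∀ p q, q ∈ C → PersistentArc A q p → p ∈ C) {i j : Fin N} (hi : i ∉ C) (hj : j ∈ C)
    (L t0 : ℕ) : ¬PersistentArc (Bmat A L t0) j i := by
  have hcut : Summable fun s => cutWeight_s9 C (A (t0 + s)) := by
    refine Summable.comp_injective (f := fun s => cutWeight_s9 C (A s)) ?_ (add_right_injective t0)
    refine summable_sum fun p hp => summable_sum fun q hq => ?_
    by_contra hpq
    exact mem_compl.1 hp <|
      hC p q hq ((persistentArc_iff_not_summable fun t => (hA t).1 p q).2 hpq)
  rw [persistentArc_iff_not_summable fun t => (bmat_mem_rowStochastic hA L t0 t).1 i j, not_not]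
  refine summable_of_sum_range_le (c := ∑' s, cutWeight_s9 C (A (t0 + s)))
    (fun t => (bmat_mem_rowStochastic hA L t0 t).1 i j)
    fun n => ?_
  calc ∑ t ∈ range n, Bmat A L t0 t i j
      ≤ ∑ t ∈ range n, ∑ v ∈ range L, cutWeight_s9 C (A (t0 + (t * L + v))) :=
        sum_le_sum fun t _ => bmat_apply_le_sum_cutWeight hA hi hj L t0 t
    _ = ∑ s ∈ range (n * L), cutWeight_s9 C (A (t0 + s)) :=
        (sum_range_mul_eq_sum_range_sum (fun s => cutWeight_s9 C (A (t0 + s))) n L).symm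
    _ ≤ ∑' s, cutWeight_s9 C (A (t0 + s)) :=
        hcut.sum_le_tsum _ fun s _ => cutWeight_nonneg_s9 C (hA _).1

theorem reflTransGen_persistentArc_of_persistentArc_bmat {L t0 : ℕ} {i j : Fin N}
    (h : PersistentArc (Bmat A L t0) j i) : Relation.ReflTransGen (PersistentArc A) j i := by
  classical
  by_contra hji
  refine not_persistentArc_bmat_of_closed hA
    (C := univ.filter (Relation.ReflTransGen (PersistentArc A) j)) ?_ (by simpa) (by simp [Relation.ReflTransGen.refl]) L t0 h
  intro p q hq hqp
  simp only [mem_filter, mem_univ, true_and] at hq ⊢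
  exact hq.tail hqp

end Blocks

theorem stmt9_general (N : ℕ) (A : ℕ → Matrix (Fin N) (Fin N) ℝ)
    (η : ℝ) (hη0 : 0 < η)
    (hnonneg : ∀ t i j, 0 ≤ A t i j)
    (hrow : ∀ t i, ∑ j, A t i j = 1)
    (hdiag : ∀ t i, η ≤ A t i i)
    (L : ℕ) (hL : 1 ≤ L)
    (t0 : ℕ) :
    HasDirectedSpanningTree (PersistentArc A) ↔
      HasDirectedSpanningTree (fun j i : Fin N =>
        Tendsto (fun n => ∑ t ∈ Finset.range n, Bmat A L t0 t i j) atTop atTop) := by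
  have hA : ∀ t, A t ∈ rowStochastic ℝ (Fin N) :=
    fun t => mem_rowStochastic_iff_sum.2 ⟨hnonneg t, hrow t⟩
  exact ⟨.of_le_reflTransGen fun _ _ h => .single (h.bmat hA hη0 hdiag hL t0),
    .of_le_reflTransGen fun _ _ h => reflTransGen_persistentArc_of_persistentArc_bmat hA h⟩

theorem stmt9 (N : ℕ) (hN : 2 ≤ N) (A : ℕ → Matrix (Fin N) (Fin N) ℝ)
    (η : ℝ) (hη0 : 0 < η) (hη1 : η < 1)
    (hnonneg : ∀ t i j, 0 ≤ A t i j)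
    (hrow : ∀ t i, ∑ j, A t i j = 1)
    (hdiag : ∀ t i, η ≤ A t i i)
    (L : ℕ) (hL : 1 ≤ L) (K : ℝ) (hK : 1 ≤ K)
    (hbal : ∀ S : Finset (Fin N), S.Nonempty → S ≠ Finset.univ → ∀ s : ℕ,
      ∑ t ∈ Finset.Ico s (s + L), ∑ i ∈ Sᶜ, ∑ j ∈ S, A t i j ≤
        K * ∑ t ∈ Finset.Ico s (s + L), ∑ i ∈ S, ∑ j ∈ Sᶜ, A t i j)
    (t0 : ℕ) :
    HasDirectedSpanningTree (PersistentArc A) ↔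
      HasDirectedSpanningTree (fun j i : Fin N =>
        Tendsto (fun n => ∑ t ∈ Finset.range n, Bmat A L t0 t i j) atTop atTop) :=
  stmt9_general N A η hη0 hnonneg hrow hdiag L hL t0
end

section
/- Let A_1, A_2, …, A_L be N×N row-stochastic matrices whose diagonal entries are all at least η, where 0 < η < 1. Then for every u ∈ {1,…,L} and all indices i, j, the product P = A_L A_{L−1} ⋯ A_1 satisfies P_{ij} ≥ η^{L−1} (A_u)_{ij}. -/
open Finset

lemma prodNonneg {N : ℕ} (l : List (Matrix (Fin N) (Fin N) ℝ))
    (h : ∀ m ∈ l, ∀ i j, (0:ℝ) ≤ m i j) : ∀ i j, 0 ≤ l.prod i j := by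
  induction l with
  | nil =>
    intro i j
    simp only [List.prod_nil, Matrix.one_apply]
    split <;> norm_num
  | cons B t ih =>
    intro i j
    rw [List.prod_cons, Matrix.mul_apply]
    apply Finset.sum_nonneg
    intro k _
    exact mul_nonneg (h B (by simp) i k) (ih (fun m hm => h m (by simp [hm])) k j)

lemma prodDiag {N : ℕ} {η : ℝ} (hη : 0 ≤ η) (l : List (Matrix (Fin N) (Fin N) ℝ))
    (h : ∀ m ∈ l, ∀ i j, (0:ℝ) ≤ m i j) (hd : ∀ m ∈ l, ∀ i, η ≤ m i i) :
    ∀ i, η ^ l.length ≤ l.prod i i := by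
  induction l with
  | nil => intro i; simp [Matrix.one_apply]
  | cons B t ih =>
    intro i
    have h' : ∀ m ∈ t, ∀ i j, (0:ℝ) ≤ m i j := fun m hm => h m (by simp [hm])
    have hd' : ∀ m ∈ t, ∀ i, η ≤ m i i := fun m hm => hd m (by simp [hm])
    rw [List.prod_cons, Matrix.mul_apply, List.length_cons, pow_succ]
    have h1 : B i i * t.prod i i ≤ ∑ k, B i k * t.prod k i :=
      Finset.single_le_sum (fun k _ => mul_nonneg (h B (by simp) i k) (prodNonneg t h' k i))
        (Finset.mem_univ i)
    have h2 : η ^ t.length * η ≤ B i i * t.prod i i := by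
      rw [mul_comm]
      exact mul_le_mul (hd B (by simp) i) (ih h' hd' i) (pow_nonneg hη _)
        (le_trans hη (hd B (by simp) i))
    linarith

lemma prodMain {N : ℕ} {η : ℝ} (hη : 0 ≤ η) (l : List (Matrix (Fin N) (Fin N) ℝ))
    (h : ∀ m ∈ l, ∀ i j, (0:ℝ) ≤ m i j) (hd : ∀ m ∈ l, ∀ i, η ≤ m i i) :
    ∀ m ∈ l, ∀ i j, η ^ (l.length - 1) * m i j ≤ l.prod i j := by
  induction l with
  | nil => intro m hm; simp at hm
  | cons B t ih =>
    intro m hm i j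
    have h' : ∀ m ∈ t, ∀ i j, (0:ℝ) ≤ m i j := fun m hm => h m (by simp [hm])
    have hd' : ∀ m ∈ t, ∀ i, η ≤ m i i := fun m hm => hd m (by simp [hm])
    rw [List.prod_cons, Matrix.mul_apply]
    simp only [List.length_cons, Nat.add_sub_cancel]
    rcases List.mem_cons.mp hm with rfl | hm'
    · have h1 : m i j * t.prod j j ≤ ∑ k, m i k * t.prod k j :=
        Finset.single_le_sum (fun k _ => mul_nonneg (h m (by simp) i k) (prodNonneg t h' k j))
          (Finset.mem_univ j)
      have h2 : m i j * η ^ t.length ≤ m i j * t.prod j j :=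
        mul_le_mul_of_nonneg_left (prodDiag hη t h' hd' j) (h m (by simp) i j)
      calc η ^ t.length * m i j = m i j * η ^ t.length := mul_comm _ _
        _ ≤ m i j * t.prod j j := h2
        _ ≤ _ := h1
    · have ht : t ≠ [] := List.ne_nil_of_mem hm'
      have hlen : t.length - 1 + 1 = t.length :=
        Nat.succ_pred_eq_of_pos (List.length_pos_iff.mpr ht)
      have h1 := ih h' hd' m hm' i j
      have h2 : B i i * t.prod i j ≤ ∑ k, B i k * t.prod k j :=
        Finset.single_le_sum (fun k _ => mul_nonneg (h B (by simp) i k) (prodNonneg t h' k j))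
          (Finset.mem_univ i)
      have h3 : η * (η ^ (t.length - 1) * m i j) ≤ B i i * t.prod i j :=
        mul_le_mul (hd B (by simp) i) h1
          (mul_nonneg (pow_nonneg hη _) (h m hm i j))
          (le_trans hη (hd B (by simp) i))
      have h4 : η ^ t.length = η * η ^ (t.length - 1) := by
        conv_lhs => rw [← hlen]
        rw [pow_succ, mul_comm]
      calc η ^ t.length * m i j = η * (η ^ (t.length - 1) * m i j) := by rw [h4, mul_assoc]
        _ ≤ B i i * t.prod i j := h3
        _ ≤ _ := h2

theorem stmt10 (N L : ℕ) (hN : 2 ≤ N) (hL : 1 ≤ L)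
    (η : ℝ) (hη0 : 0 < η) (hη1 : η < 1)
    (A : Fin L → Matrix (Fin N) (Fin N) ℝ)
    (hnonneg : ∀ k i j, 0 ≤ A k i j)
    (hrow : ∀ k i, ∑ j, A k i j = 1)
    (hdiag : ∀ k i, η ≤ A k i i) :
    ∀ (u : Fin L) (i j : Fin N),
      η ^ (L - 1) * A u i j ≤ (List.ofFn (fun v : Fin L => A v.rev)).prod i j := by
  intro u i j
  set l := List.ofFn (fun v : Fin L => A v.rev) with hl
  have hmem : A u ∈ l := by
    rw [hl, List.mem_ofFn]
    exact ⟨u.rev, by simp [Fin.rev_rev]⟩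
  have h : ∀ m ∈ l, ∀ i j, (0:ℝ) ≤ m i j := by
    intro m hm
    rw [hl, List.mem_ofFn] at hm
    obtain ⟨v, rfl⟩ := hm
    exact hnonneg _
  have hd : ∀ m ∈ l, ∀ i, η ≤ m i i := by
    intro m hm
    rw [hl, List.mem_ofFn] at hm
    obtain ⟨v, rfl⟩ := hm
    exact hdiag _
  have := prodMain (le_of_lt hη0) l h hd (A u) hmem i j
  simpa [hl] using this
end

section
/- Suppose Assumption 1 holds. Fix an initial time t0 ≥ 0 and an integer L ≥ 1, and define B(t) = A((t+1)L − 1 + t0) ⋯ A(tL + 1 + t0) A(tL + t0) for each t ≥ 0, with entries b_ij(t). If ∑_{t=0}^∞ b_ij(t) = ∞ for some pair (j,i), then there exist nodes k_0 = j, k_1, …, k_{L−1}, k_L = i such that ∑_{t=0}^∞ a_{k_{s+1} k_s}(tL + s + t0) = ∞ for every s ∈ {0,…,L−1}; consequently each (k_s, k_{s+1}) is a persistent arc, and there is a directed walk of length L from j to i in the persistent graph G_p. -/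
open Filter Finset

/-!
Expanding the product `B(t)` entrywise writes `b_ij(t)` as a finite sum, over walks
`j = k_0, k_1, …, k_L = i`, of the weights `∏_s a_{k_{s+1} k_s}(tL + s + t0)`. If the series of
the `b_ij(t)` diverges, then so does the series of the weights of one walk, since a finite sum of
convergent series converges. All entries lie in `[0, 1]`, so each weight is at most each of its
factors, and every factor series diverges; it is a subseries of `∑_t a_{k_{s+1} k_s}(t)`, which
therefore diverges as well.
-/

open Matrix

theorem List.reverse_ofFn {α : Type*} {L : ℕ} (f : Fin L → α) :
    (List.ofFn f).reverse = List.ofFn (f ∘ Fin.rev) := by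
  rw [ofFn_eq_map, ofFn_eq_map, ← map_reverse, finRange_reverse, map_map]

theorem Matrix.prod_ofFn_apply {R n : Type*} [CommSemiring R] [Fintype n] [DecidableEq n]
    {L : ℕ} (g : Fin L → Matrix n n R) (i j : n) :
    (List.ofFn g).prod i j =
      ∑ p : Fin (L + 1) → n with p 0 = i ∧ p (Fin.last L) = j,
        ∏ s, g s (p s.castSucc) (p s.succ) := by
  induction L generalizing i with
  | zero =>
    rw [sum_filter, ← (Equiv.funUnique (Fin 1) n).symm.sum_comp]
    simp [one_apply, ite_and]
  | succ L ih =>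
    rw [List.ofFn_succ, List.prod_cons, mul_apply, sum_filter,
      ← (Fin.consEquiv fun _ => n).sum_comp, Fintype.sum_prod_type, sum_comm]
    simp only [ih, sum_filter, ite_and, mul_sum, mul_ite, mul_zero, Fin.consEquiv_apply,
      Fin.cons_zero, ← Fin.succ_last, Fin.cons_succ, Fin.prod_univ_succ, Fin.castSucc_zero,
      Fin.castSucc_succ, sum_ite_eq', mem_univ, if_true]
    rw [sum_comm]
    simp

theorem Bmat_apply {N : ℕ} (A : ℕ → Matrix (Fin N) (Fin N) ℝ) (L t0 t : ℕ) (i j : Fin N) :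
    Bmat A L t0 t i j =
      ∑ k : Fin (L + 1) → Fin N with k 0 = j ∧ k (Fin.last L) = i,
        ∏ s : Fin L, A (t * L + s + t0) (k s.succ) (k s.castSucc) := by
  -- Transposing reverses the product, putting the factors in increasing order of time.
  have hrev : Bmat A L t0 t = ((List.ofFn fun s : Fin L => (A (t * L + s + t0))ᵀ).prod)ᵀ := by
    rw [Bmat, transpose_list_prod, List.map_ofFn, List.reverse_ofFn]
    congr 2
    funext s
    have := s.isLt
    simp only [Function.comp_apply, transpose_transpose, Fin.val_rev]
    congr 1
    rw [add_mul, one_mul]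
    omega
  rw [hrev, transpose_apply, prod_ofFn_apply]
  rfl

theorem exists_not_summable_of_not_summable_sum {ι β α : Type*} [AddCommMonoid α]
    [TopologicalSpace α] [ContinuousAdd α] {s : Finset ι} {f : ι → β → α}
    (h : ¬Summable fun b => ∑ k ∈ s, f k b) : ∃ k ∈ s, ¬Summable (f k) := by
  by_contra! hs
  exact h (summable_sum hs)

theorem Finset.prod_le_of_mem {ι R : Type*} [CommSemiring R] [PartialOrder R]
    [IsOrderedRing R] {s : Finset ι} {f : ι → R} (h0 : ∀ k ∈ s, 0 ≤ f k)
    (h1 : ∀ k ∈ s, f k ≤ 1) {a : ι} (ha : a ∈ s) : ∏ k ∈ s, f k ≤ f a := by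
  classical
  rw [← mul_prod_erase s f ha]
  exact mul_le_of_le_one_right (h0 a ha)
    (prod_le_one (fun k hk => h0 k (mem_of_mem_erase hk)) fun k hk => h1 k (mem_of_mem_erase hk))

theorem not_summable_of_not_summable_prod {ι β : Type*} [Fintype ι] {f : β → ι → ℝ}
    (h0 : ∀ t s, 0 ≤ f t s) (h1 : ∀ t s, f t s ≤ 1)
    (h : ¬Summable fun t => ∏ s, f t s) (s : ι) : ¬Summable fun t => f t s :=
  fun hs => h (hs.of_nonneg_of_le (fun t => prod_nonneg fun s _ => h0 t s)
    fun t => prod_le_of_mem (fun s _ => h0 t s) (fun s _ => h1 t s) (mem_univ s))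

theorem stmt11_general (N : ℕ) (A : ℕ → Matrix (Fin N) (Fin N) ℝ)
    (hnonneg : ∀ t i j, 0 ≤ A t i j)
    (hrow : ∀ t i, ∑ j, A t i j = 1)
    (t0 : ℕ) (L : ℕ)
    (j i : Fin N)
    (hdiv : Tendsto (fun n => ∑ t ∈ Finset.range n, Bmat A L t0 t i j) atTop atTop) :
    ∃ k : Fin (L + 1) → Fin N, k 0 = j ∧ k (Fin.last L) = i ∧
      ∀ s : Fin L,
        Tendsto (fun n => ∑ t ∈ Finset.range n,
          A (t * L + (s : ℕ) + t0) (k s.succ) (k s.castSucc)) atTop atTop ∧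
        PersistentArc A (k s.castSucc) (k s.succ) := by
  have hle : ∀ t a b, A t a b ≤ 1 := fun t a b =>
    hrow t a ▸ single_le_sum (fun c _ => hnonneg t a c) (mem_univ b)
  have hB : ¬Summable fun t => Bmat A L t0 t i j := by
    refine (not_summable_iff_tendsto_nat_atTop_of_nonneg fun t => ?_).2 hdiv
    rw [Bmat_apply]
    exact sum_nonneg fun k _ => prod_nonneg fun s _ => hnonneg _ _ _
  simp only [Bmat_apply] at hB
  obtain ⟨k, hk, hwalk⟩ := exists_not_summable_of_not_summable_sum hB
  obtain ⟨hj, hi⟩ := (mem_filter.1 hk).2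
  refine ⟨k, hj, hi, fun s => ?_⟩
  have harc := not_summable_of_not_summable_prod (fun t s => hnonneg _ _ _)
    (fun t s => hle _ _ _) hwalk s
  have hinj : Function.Injective fun t => t * L + (s : ℕ) + t0 := fun a b hab =>
    Nat.eq_of_mul_eq_mul_right s.pos (by simpa using hab)
  refine ⟨(not_summable_iff_tendsto_nat_atTop_of_nonneg fun t => hnonneg _ _ _).1 harc, ?_⟩
  exact (not_summable_iff_tendsto_nat_atTop_of_nonneg fun t => hnonneg _ _ _).1
    fun hs => harc (hs.comp_injective hinj)

theorem stmt11 (N : ℕ) (hN : 2 ≤ N) (A : ℕ → Matrix (Fin N) (Fin N) ℝ)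
    (η : ℝ) (hη0 : 0 < η) (hη1 : η < 1)
    (hnonneg : ∀ t i j, 0 ≤ A t i j)
    (hrow : ∀ t i, ∑ j, A t i j = 1)
    (hdiag : ∀ t i, η ≤ A t i i)
    (t0 : ℕ) (L : ℕ) (hL : 1 ≤ L)
    (j i : Fin N)
    (hdiv : Tendsto (fun n => ∑ t ∈ Finset.range n, Bmat A L t0 t i j) atTop atTop) :
    ∃ k : Fin (L + 1) → Fin N, k 0 = j ∧ k (Fin.last L) = i ∧
      ∀ s : Fin L,
        Tendsto (fun n => ∑ t ∈ Finset.range n,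
          A (t * L + (s : ℕ) + t0) (k s.succ) (k s.castSucc)) atTop atTop ∧
        PersistentArc A (k s.castSucc) (k s.succ) :=
  stmt11_general N A hnonneg hrow t0 L j i hdiv
end

section
/- Let B = [b_ij] be an N×N row-stochastic matrix satisfying the balanced asymmetry condition with constant M ≥ 1, let σ and μ be permutations of {1,…,N}, and set c_ij = b_{μ(i), σ(j)}. Then for every sorted vector z ∈ ℝ^N (i.e., z_1 ≤ z_2 ≤ ⋯ ≤ z_N) and every 1 ≤ l ≤ N−1, ∑_{i=1}^{l} M^{−i} ( ∑_{j=1}^{N} c_ij (z_j − z_i) ) ≥ (z_{l+1} − z_l) M^{−l} ∑_{i=l+1}^{N} ∑_{j=1}^{l} c_{ji} ≥ 0. -/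
open Finset

theorem stmt13 (N : ℕ) (hN : 2 ≤ N) (M : ℝ) (hM : 1 ≤ M)
    (B : Matrix (Fin N) (Fin N) ℝ)
    (hnonneg : ∀ i j, 0 ≤ B i j)
    (hrow : ∀ i, ∑ j, B i j = 1)
    (hbal : ∀ S1 S2 : Finset (Fin N), S1.Nonempty → S1 ≠ Finset.univ →
      S2.Nonempty → S2 ≠ Finset.univ → S1.card = S2.card →
      ∑ i ∈ S1ᶜ, ∑ j ∈ S2, B i j ≤ M * ∑ i ∈ S1, ∑ j ∈ S2ᶜ, B i j)
    (σ μ : Equiv.Perm (Fin N))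
    (z : Fin N → ℝ) (hz : Monotone z)
    (l : ℕ) (hl1 : 1 ≤ l) (hl2 : l ≤ N - 1) :
    (z ⟨l, by omega⟩ - z ⟨l - 1, by omega⟩) * M ^ (-(l : ℤ)) *
        ∑ i ∈ Finset.univ.filter (fun i : Fin N => l ≤ (i : ℕ)),
          ∑ j ∈ Finset.univ.filter (fun j : Fin N => (j : ℕ) < l), B (μ j) (σ i) ≤
      ∑ i ∈ Finset.univ.filter (fun i : Fin N => (i : ℕ) < l),
        M ^ (-((i : ℕ) + 1 : ℤ)) * ∑ j, B (μ i) (σ j) * (z j - z i) ∧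
    0 ≤ (z ⟨l, by omega⟩ - z ⟨l - 1, by omega⟩) * M ^ (-(l : ℤ)) *
        ∑ i ∈ Finset.univ.filter (fun i : Fin N => l ≤ (i : ℕ)),
          ∑ j ∈ Finset.univ.filter (fun j : Fin N => (j : ℕ) < l), B (μ j) (σ i) := by
  have hM0 : (0:ℝ) < M := lt_of_lt_of_le one_pos hM
  set C : Fin N → Fin N → ℝ := fun i j => B (μ i) (σ j) with hCdef
  have hCnn : ∀ i j, 0 ≤ C i j := fun i j => hnonneg _ _
  have hCrow : ∀ i, ∑ j, C i j = 1 := by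
    intro i
    calc ∑ j, C i j = ∑ j, B (μ i) j := Fintype.sum_equiv σ _ _ (fun j => rfl)
    _ = 1 := hrow _
  have hmapcompl : ∀ (e : Equiv.Perm (Fin N)) (S : Finset (Fin N)),
      (S.map e.toEmbedding)ᶜ = Sᶜ.map e.toEmbedding := by
    intro e S
    ext x
    simp [Finset.mem_map_equiv]
  have hmapnu : ∀ (e : Equiv.Perm (Fin N)) (S : Finset (Fin N)), S ≠ univ →
      S.map e.toEmbedding ≠ univ := by
    intro e S hS h
    have := congrArg Finset.card h
    rw [Finset.card_map, Finset.card_univ] at this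
    exact hS (Finset.eq_univ_of_card _ this)
  have hCbal : ∀ S : Finset (Fin N), S.Nonempty → S ≠ univ →
      ∑ i ∈ Sᶜ, ∑ j ∈ S, C i j ≤ M * ∑ i ∈ S, ∑ j ∈ Sᶜ, C i j := by
    intro S hne hnu
    have h1 : ∀ (T U : Finset (Fin N)),
        ∑ i ∈ T, ∑ j ∈ U, C i j
          = ∑ i ∈ T.map μ.toEmbedding, ∑ j ∈ U.map σ.toEmbedding, B i j := by
      intro T U
      rw [Finset.sum_map]
      refine Finset.sum_congr rfl (fun i _ => ?_)
      rw [Finset.sum_map]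
      rfl
    calc ∑ i ∈ Sᶜ, ∑ j ∈ S, C i j
        = ∑ i ∈ (S.map μ.toEmbedding)ᶜ, ∑ j ∈ S.map σ.toEmbedding, B i j := by
          rw [h1, hmapcompl]
      _ ≤ M * ∑ i ∈ S.map μ.toEmbedding, ∑ j ∈ (S.map σ.toEmbedding)ᶜ, B i j :=
          hbal _ _ hne.map (hmapnu _ _ hnu) hne.map (hmapnu _ _ hnu)
            (by rw [Finset.card_map, Finset.card_map])
      _ = M * ∑ i ∈ S, ∑ j ∈ Sᶜ, C i j := by rw [hmapcompl, ← h1]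
  -- telescoping setup
  set g : ℕ → ℝ := fun k => z ⟨min k (N-1), by omega⟩ with hgdef
  set d : ℕ → ℝ := fun k => g (k+1) - g k with hddef
  have hd : ∀ k, 0 ≤ d k := by
    intro k
    have h : (⟨min k (N-1), by omega⟩ : Fin N) ≤ ⟨min (k+1) (N-1), by omega⟩ := by
      simp only [Fin.mk_le_mk]
      omega
    have := hz h
    simp only [hddef, hgdef]
    linarith
  have hg : ∀ j : Fin N, z j = g (j:ℕ) := by
    intro j
    have hj := j.isLt
    have h : (⟨min (j:ℕ) (N-1), by omega⟩ : Fin N) = j := Fin.ext (by simp; omega)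
    simp only [hgdef, h]
  have htel2 : ∀ j : Fin N, z j = g 0 + ∑ k ∈ range (N-1), if k < (j:ℕ) then d k else 0 := by
    intro j
    have hj := j.isLt
    have hsub : ∑ k ∈ range (N-1), (if k < (j:ℕ) then d k else 0) = ∑ k ∈ range (j:ℕ), d k := by
      rw [← Finset.sum_filter]
      congr 1
      ext x
      simp only [Finset.mem_filter, Finset.mem_range]
      omega
    rw [hsub]
    have hts : ∑ k ∈ range (j:ℕ), d k = g (j:ℕ) - g 0 := by
      simp only [hddef]
      exact Finset.sum_range_sub g (j:ℕ)
    rw [hts, hg j]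
    ring
  have htel : ∀ i j : Fin N, z j - z i =
      (∑ k ∈ range (N-1), if k < (j:ℕ) then d k else 0)
      - (∑ k ∈ range (N-1), if k < (i:ℕ) then d k else 0) := by
    intro i j
    rw [htel2 i, htel2 j]
    ring
  set T : ℕ → ℝ := fun k => ∑ i ∈ univ.filter (fun i : Fin N => (i:ℕ) < l),
      M ^ (-((i:ℕ)+1:ℤ)) * ((∑ j ∈ univ.filter (fun j : Fin N => k < (j:ℕ)), C i j)
        - (if k < (i:ℕ) then 1 else 0)) with hTdef
  have hper : ∀ i : Fin N, ∑ j, C i j * (z j - z i)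
      = ∑ k ∈ range (N-1), d k * ((∑ j ∈ univ.filter (fun j : Fin N => k < (j:ℕ)), C i j)
          - (if k < (i:ℕ) then 1 else 0)) := by
    intro i
    calc ∑ j, C i j * (z j - z i)
        = ∑ j : Fin N, ∑ k ∈ range (N-1),
            (C i j * (if k < (j:ℕ) then d k else 0) - C i j * (if k < (i:ℕ) then d k else 0)) := by
          refine Finset.sum_congr rfl fun j _ => ?_
          rw [htel i j, mul_sub, Finset.mul_sum, Finset.mul_sum, ← Finset.sum_sub_distrib]
      _ = ∑ k ∈ range (N-1), ∑ j : Fin N,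
            (C i j * (if k < (j:ℕ) then d k else 0) - C i j * (if k < (i:ℕ) then d k else 0)) :=
          Finset.sum_comm
      _ = ∑ k ∈ range (N-1), d k * ((∑ j ∈ univ.filter (fun j : Fin N => k < (j:ℕ)), C i j)
            - (if k < (i:ℕ) then 1 else 0)) := by
          refine Finset.sum_congr rfl fun k _ => ?_
          rw [Finset.sum_sub_distrib]
          have e1 : ∑ j : Fin N, C i j * (if k < (j:ℕ) then d k else 0)
              = (∑ j ∈ univ.filter (fun j : Fin N => k < (j:ℕ)), C i j) * d k := by
            calc ∑ j : Fin N, C i j * (if k < (j:ℕ) then d k else 0)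
                = ∑ j : Fin N, (if k < (j:ℕ) then C i j * d k else 0) := by
                  refine Finset.sum_congr rfl fun j _ => ?_
                  split_ifs <;> ring
              _ = ∑ j ∈ univ.filter (fun j : Fin N => k < (j:ℕ)), C i j * d k :=
                  (Finset.sum_filter _ _).symm
              _ = _ := by rw [Finset.sum_mul]
          have e2 : ∑ j : Fin N, C i j * (if k < (i:ℕ) then d k else 0)
              = (if k < (i:ℕ) then 1 else 0) * d k := by
            rw [← Finset.sum_mul, hCrow i]
            split_ifs <;> ring
          rw [e1, e2]
          ring
  have hmain : ∑ i ∈ univ.filter (fun i : Fin N => (i:ℕ) < l),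
      M ^ (-((i:ℕ)+1:ℤ)) * ∑ j, C i j * (z j - z i) = ∑ k ∈ range (N-1), d k * T k := by
    calc ∑ i ∈ univ.filter (fun i : Fin N => (i:ℕ) < l),
        M ^ (-((i:ℕ)+1:ℤ)) * ∑ j, C i j * (z j - z i)
        = ∑ i ∈ univ.filter (fun i : Fin N => (i:ℕ) < l), ∑ k ∈ range (N-1),
            M ^ (-((i:ℕ)+1:ℤ)) * (d k * ((∑ j ∈ univ.filter (fun j : Fin N => k < (j:ℕ)), C i j)
              - (if k < (i:ℕ) then 1 else 0))) := by
          refine Finset.sum_congr rfl fun i _ => ?_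
          rw [hper i, Finset.mul_sum]
      _ = ∑ k ∈ range (N-1), ∑ i ∈ univ.filter (fun i : Fin N => (i:ℕ) < l),
            M ^ (-((i:ℕ)+1:ℤ)) * (d k * ((∑ j ∈ univ.filter (fun j : Fin N => k < (j:ℕ)), C i j)
              - (if k < (i:ℕ) then 1 else 0))) := Finset.sum_comm
      _ = ∑ k ∈ range (N-1), d k * T k := by
          refine Finset.sum_congr rfl fun k _ => ?_
          simp only [hTdef]
          rw [Finset.mul_sum]
          refine Finset.sum_congr rfl fun i _ => ?_
          ring
  -- nonnegativity of T k
  have hTnn : ∀ k ∈ range (N-1), 0 ≤ T k := by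
    intro k _
    by_cases hk : l ≤ k + 1
    · -- easy case: no i < l exceeds k
      simp only [hTdef]
      refine Finset.sum_nonneg fun i hi => ?_
      rw [Finset.mem_filter] at hi
      have : ¬ (k < (i:ℕ)) := by omega
      rw [if_neg this, sub_zero]
      exact mul_nonneg (zpow_nonneg hM0.le _)
        (Finset.sum_nonneg fun j _ => hCnn i j)
    · -- balanced asymmetry case : k + 1 < l
      push_neg at hk
      set S : Finset (Fin N) := univ.filter (fun i : Fin N => (i:ℕ) ≤ k) with hSdef
      have hmemS : ∀ i : Fin N, i ∈ S ↔ (i:ℕ) ≤ k := by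
        intro i; simp [hSdef]
      have hSne : S.Nonempty := ⟨⟨0, by omega⟩, by rw [hmemS]; simp⟩
      have hSnu : S ≠ univ := by
        intro h
        have : (⟨k+1, by omega⟩ : Fin N) ∈ S := h ▸ Finset.mem_univ _
        rw [hmemS] at this
        simp at this
      have hSc : Sᶜ = univ.filter (fun i : Fin N => k < (i:ℕ)) := by
        ext x
        simp [hSdef]
      have hbalS := hCbal S hSne hSnu
      -- split T k
      have hsplit : T k = (∑ i ∈ S, M ^ (-((i:ℕ)+1:ℤ)) *
            ∑ j ∈ univ.filter (fun j : Fin N => k < (j:ℕ)), C i j)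
          - ∑ i ∈ univ.filter (fun i : Fin N => (i:ℕ) < l ∧ k < (i:ℕ)),
              M ^ (-((i:ℕ)+1:ℤ)) * ∑ j ∈ S, C i j := by
        simp only [hTdef]
        rw [← Finset.sum_filter_add_sum_filter_not
          (univ.filter (fun i : Fin N => (i:ℕ) < l)) (fun i : Fin N => (i:ℕ) ≤ k)]
        have hL1 : ∑ i ∈ (univ.filter (fun i : Fin N => (i:ℕ) < l)).filter
              (fun i : Fin N => (i:ℕ) ≤ k),
            M ^ (-((i:ℕ)+1:ℤ)) * ((∑ j ∈ univ.filter (fun j : Fin N => k < (j:ℕ)), C i j)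
              - (if k < (i:ℕ) then 1 else 0))
            = ∑ i ∈ S, M ^ (-((i:ℕ)+1:ℤ)) *
              ∑ j ∈ univ.filter (fun j : Fin N => k < (j:ℕ)), C i j := by
          rw [Finset.filter_filter]
          have hfe : univ.filter (fun i : Fin N => (i:ℕ) < l ∧ (i:ℕ) ≤ k) = S := by
            ext x; rw [hmemS]; simp; omega
          rw [hfe]
          refine Finset.sum_congr rfl fun i hi => ?_
          rw [hmemS] at hi
          rw [if_neg (by omega : ¬ k < (i:ℕ)), sub_zero]
        have hL2 : ∑ i ∈ (univ.filter (fun i : Fin N => (i:ℕ) < l)).filter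
              (fun i : Fin N => ¬ (i:ℕ) ≤ k),
            M ^ (-((i:ℕ)+1:ℤ)) * ((∑ j ∈ univ.filter (fun j : Fin N => k < (j:ℕ)), C i j)
              - (if k < (i:ℕ) then 1 else 0))
            = -∑ i ∈ univ.filter (fun i : Fin N => (i:ℕ) < l ∧ k < (i:ℕ)),
              M ^ (-((i:ℕ)+1:ℤ)) * ∑ j ∈ S, C i j := by
          rw [Finset.filter_filter]
          have hfe2 : univ.filter (fun i : Fin N => (i:ℕ) < l ∧ ¬ (i:ℕ) ≤ k)
              = univ.filter (fun i : Fin N => (i:ℕ) < l ∧ k < (i:ℕ)) := by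
            ext x; simp only [Finset.mem_filter, Finset.mem_univ, true_and, not_le]
          rw [hfe2, ← Finset.sum_neg_distrib]
          refine Finset.sum_congr rfl fun i hi => ?_
          rw [Finset.mem_filter] at hi
          rw [if_pos (by omega : k < (i:ℕ))]
          have hrs : (∑ j ∈ univ.filter (fun j : Fin N => k < (j:ℕ)), C i j)
              + ∑ j ∈ S, C i j = 1 := by
            rw [← hCrow i, ← Finset.sum_filter_add_sum_filter_not univ
              (fun j : Fin N => k < (j:ℕ)) (C i)]
            have hSS : S = univ.filter (fun j : Fin N => ¬ k < (j:ℕ)) := by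
              ext x; rw [hmemS]; simp
            rw [hSS]
          have : (∑ j ∈ univ.filter (fun j : Fin N => k < (j:ℕ)), C i j) - 1
              = -(∑ j ∈ S, C i j) := by linarith
          rw [this]
          ring
        rw [hL1, hL2]
        ring
      rw [hsplit, sub_nonneg]
      have hA : M ^ (-(k+1:ℤ)) * ∑ i ∈ S, ∑ j ∈ univ.filter (fun j : Fin N => k < (j:ℕ)), C i j
          ≤ ∑ i ∈ S, M ^ (-((i:ℕ)+1:ℤ)) *
            ∑ j ∈ univ.filter (fun j : Fin N => k < (j:ℕ)), C i j := by
        rw [Finset.mul_sum]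
        refine Finset.sum_le_sum fun i hi => ?_
        rw [hmemS] at hi
        refine mul_le_mul_of_nonneg_right ?_ (Finset.sum_nonneg fun j _ => hCnn i j)
        exact zpow_le_zpow_right₀ hM (by omega)
      have hE : ∑ i ∈ univ.filter (fun i : Fin N => (i:ℕ) < l ∧ k < (i:ℕ)),
            M ^ (-((i:ℕ)+1:ℤ)) * ∑ j ∈ S, C i j
          ≤ M ^ (-(k+2:ℤ)) * ∑ i ∈ Sᶜ, ∑ j ∈ S, C i j := by
        have hE1 : ∑ i ∈ univ.filter (fun i : Fin N => (i:ℕ) < l ∧ k < (i:ℕ)),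
              M ^ (-((i:ℕ)+1:ℤ)) * ∑ j ∈ S, C i j
            ≤ ∑ i ∈ univ.filter (fun i : Fin N => (i:ℕ) < l ∧ k < (i:ℕ)),
              M ^ (-(k+2:ℤ)) * ∑ j ∈ S, C i j := by
          refine Finset.sum_le_sum fun i hi => ?_
          rw [Finset.mem_filter] at hi
          refine mul_le_mul_of_nonneg_right ?_ (Finset.sum_nonneg fun j _ => hCnn i j)
          exact zpow_le_zpow_right₀ hM (by omega)
        have hE2 : ∑ i ∈ univ.filter (fun i : Fin N => (i:ℕ) < l ∧ k < (i:ℕ)),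
              M ^ (-(k+2:ℤ)) * ∑ j ∈ S, C i j
            ≤ ∑ i ∈ Sᶜ, M ^ (-(k+2:ℤ)) * ∑ j ∈ S, C i j := by
          refine Finset.sum_le_sum_of_subset_of_nonneg ?_ ?_
          · intro x hx
            rw [Finset.mem_filter] at hx
            rw [Finset.mem_compl, hmemS]
            omega
          · intro x _ _
            exact mul_nonneg (zpow_nonneg hM0.le _) (Finset.sum_nonneg fun j _ => hCnn x j)
        rw [Finset.mul_sum]
        exact le_trans hE1 hE2
      refine le_trans hE (le_trans ?_ hA)
      have hpow : M ^ (-(k+2:ℤ)) * M = M ^ (-(k+1:ℤ)) := by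
        rw [← zpow_add_one₀ (ne_of_gt hM0)]
        congr 1
      calc M ^ (-(k+2:ℤ)) * ∑ i ∈ Sᶜ, ∑ j ∈ S, C i j
          ≤ M ^ (-(k+2:ℤ)) * (M * ∑ i ∈ S, ∑ j ∈ Sᶜ, C i j) :=
            mul_le_mul_of_nonneg_left hbalS (zpow_nonneg hM0.le _)
        _ = M ^ (-(k+1:ℤ)) * ∑ i ∈ S, ∑ j ∈ Sᶜ, C i j := by
            rw [← mul_assoc, hpow]
        _ = M ^ (-(k+1:ℤ)) * ∑ i ∈ S, ∑ j ∈ univ.filter (fun j : Fin N => k < (j:ℕ)), C i j := by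
            rw [hSc]
  -- lower bound for T (l-1)
  have hTl : M ^ (-(l:ℤ)) * ∑ i ∈ univ.filter (fun i : Fin N => l ≤ (i:ℕ)),
      ∑ j ∈ univ.filter (fun j : Fin N => (j:ℕ) < l), C j i ≤ T (l-1) := by
    have hswap : ∑ i ∈ univ.filter (fun i : Fin N => l ≤ (i:ℕ)),
        ∑ j ∈ univ.filter (fun j : Fin N => (j:ℕ) < l), C j i
        = ∑ j ∈ univ.filter (fun j : Fin N => (j:ℕ) < l),
            ∑ i ∈ univ.filter (fun i : Fin N => l ≤ (i:ℕ)), C j i := Finset.sum_comm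
    rw [hswap]
    simp only [hTdef]
    rw [Finset.mul_sum]
    refine Finset.sum_le_sum fun i hi => ?_
    rw [Finset.mem_filter] at hi
    rw [if_neg (by omega : ¬ l - 1 < (i:ℕ)), sub_zero]
    have hfe : univ.filter (fun j : Fin N => l - 1 < (j:ℕ))
        = univ.filter (fun j : Fin N => l ≤ (j:ℕ)) := by
      ext x; simp; omega
    rw [hfe]
    refine mul_le_mul_of_nonneg_right ?_ (Finset.sum_nonneg fun j _ => hCnn i j)
    exact zpow_le_zpow_right₀ hM (by omega)
  have hdl : d (l-1) = z ⟨l, by omega⟩ - z ⟨l-1, by omega⟩ := by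
    have e1 : (⟨min (l-1+1) (N-1), by omega⟩ : Fin N) = ⟨l, by omega⟩ := Fin.ext (by simp; omega)
    have e2 : (⟨min (l-1) (N-1), by omega⟩ : Fin N) = ⟨l-1, by omega⟩ := Fin.ext (by simp; omega)
    simp only [hddef, hgdef, e1, e2]
  have hSig : 0 ≤ ∑ i ∈ univ.filter (fun i : Fin N => l ≤ (i:ℕ)),
      ∑ j ∈ univ.filter (fun j : Fin N => (j:ℕ) < l), C j i :=
    Finset.sum_nonneg fun i _ => Finset.sum_nonneg fun j _ => hCnn j i
  have hdl0 : 0 ≤ d (l-1) := hd _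
  constructor
  · rw [hmain]
    have hmem : l - 1 ∈ range (N-1) := by rw [Finset.mem_range]; omega
    have h1 : d (l-1) * T (l-1) ≤ ∑ k ∈ range (N-1), d k * T k :=
      Finset.single_le_sum (f := fun k => d k * T k)
        (fun k hk => mul_nonneg (hd k) (hTnn k hk)) hmem
    refine le_trans ?_ h1
    calc (z ⟨l, by omega⟩ - z ⟨l - 1, by omega⟩) * M ^ (-(l : ℤ)) *
          ∑ i ∈ univ.filter (fun i : Fin N => l ≤ (i:ℕ)),
            ∑ j ∈ univ.filter (fun j : Fin N => (j:ℕ) < l), C j i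
        = d (l-1) * (M ^ (-(l:ℤ)) * ∑ i ∈ univ.filter (fun i : Fin N => l ≤ (i:ℕ)),
            ∑ j ∈ univ.filter (fun j : Fin N => (j:ℕ) < l), C j i) := by
          rw [hdl]; ring
      _ ≤ d (l-1) * T (l-1) := mul_le_mul_of_nonneg_left hTl hdl0
  · refine mul_nonneg (mul_nonneg ?_ (zpow_nonneg hM0.le _)) hSig
    rw [← hdl]
    exact hdl0
end

section
/- Let B = [b_ij] be an N×N row-stochastic matrix with b_ii ≥ γ for all i, where 0 < γ ≤ 1, and suppose B satisfies the cut-balance condition with constant M* ≥ 1: for every nonempty proper subset S of {1,…,N}, ∑_{i∉S, j∈S} b_ij ≤ M* ∑_{i∈S, j∉S} b_ij. Then B satisfies the balanced asymmetry condition with constant M = max{M*, (N−1)/γ}: for any two nonempty proper subsets S1, S2 of {1,…,N} with |S1| = |S2|, ∑_{i∉S1, j∈S2} b_ij ≤ M ∑_{i∈S1, j∉S2} b_ij. -/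
open Finset

theorem stmt17 (N : ℕ) (hN : 2 ≤ N) (γ : ℝ) (hγ0 : 0 < γ) (hγ1 : γ ≤ 1)
    (Mst : ℝ) (hMst : 1 ≤ Mst)
    (B : Matrix (Fin N) (Fin N) ℝ)
    (hnonneg : ∀ i j, 0 ≤ B i j)
    (hrow : ∀ i, ∑ j, B i j = 1)
    (hdiag : ∀ i, γ ≤ B i i)
    (hcut : ∀ S : Finset (Fin N), S.Nonempty → S ≠ Finset.univ →
      ∑ i ∈ Sᶜ, ∑ j ∈ S, B i j ≤ Mst * ∑ i ∈ S, ∑ j ∈ Sᶜ, B i j) :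
    ∀ S1 S2 : Finset (Fin N), S1.Nonempty → S1 ≠ Finset.univ →
      S2.Nonempty → S2 ≠ Finset.univ → S1.card = S2.card →
      ∑ i ∈ S1ᶜ, ∑ j ∈ S2, B i j ≤
        max Mst (((N : ℝ) - 1) / γ) * ∑ i ∈ S1, ∑ j ∈ S2ᶜ, B i j := by
  intro S1 S2 h1ne h1u h2ne h2u hcard
  have hRnn : 0 ≤ ∑ i ∈ S1, ∑ j ∈ S2ᶜ, B i j :=
    Finset.sum_nonneg fun i _ => Finset.sum_nonneg fun j _ => hnonneg i j
  by_cases heq : S1 = S2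
  · subst heq
    calc ∑ i ∈ S1ᶜ, ∑ j ∈ S1, B i j ≤ Mst * ∑ i ∈ S1, ∑ j ∈ S1ᶜ, B i j :=
          hcut S1 h1ne h1u
      _ ≤ max Mst (((N : ℝ) - 1) / γ) * ∑ i ∈ S1, ∑ j ∈ S1ᶜ, B i j :=
          mul_le_mul_of_nonneg_right (le_max_left _ _) hRnn
  · -- find i ∈ S1 \ S2
    have hnsub : ¬ S1 ⊆ S2 := fun hsub =>
      heq (Finset.eq_of_subset_of_card_le hsub hcard.ge)
    obtain ⟨i, hi1, hi2⟩ := Finset.not_subset.mp hnsub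
    have hRγ : γ ≤ ∑ i ∈ S1, ∑ j ∈ S2ᶜ, B i j := by
      calc γ ≤ B i i := hdiag i
        _ ≤ ∑ j ∈ S2ᶜ, B i j :=
            Finset.single_le_sum (fun j _ => hnonneg i j) (Finset.mem_compl.mpr hi2)
        _ ≤ ∑ i ∈ S1, ∑ j ∈ S2ᶜ, B i j :=
            Finset.single_le_sum
              (fun k _ => Finset.sum_nonneg fun j _ => hnonneg k j) hi1
    have hLhs : ∑ i ∈ S1ᶜ, ∑ j ∈ S2, B i j ≤ (N : ℝ) - 1 := by
      have h1 : ∑ i ∈ S1ᶜ, ∑ j ∈ S2, B i j ≤ ∑ i ∈ S1ᶜ, ∑ j, B i j :=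
        Finset.sum_le_sum fun k _ =>
          Finset.sum_le_sum_of_subset_of_nonneg (Finset.subset_univ S2)
            (fun j _ _ => hnonneg k j)
      have h2 : ∑ i ∈ S1ᶜ, ∑ j, B i j = (S1ᶜ.card : ℝ) := by
        rw [Finset.sum_congr rfl fun k _ => hrow k]
        simp
      have h3 : (S1ᶜ.card : ℝ) ≤ (N : ℝ) - 1 := by
        have h1c : 1 ≤ S1.card := Finset.card_pos.mpr h1ne
        have hle : S1.card ≤ N := by
          simpa using Finset.card_le_univ S1
        have hc : S1ᶜ.card = N - S1.card := by
          simp [Finset.card_compl]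
        rw [hc, Nat.cast_sub hle]
        have : (1 : ℝ) ≤ (S1.card : ℝ) := by exact_mod_cast h1c
        linarith
      linarith
    have hM : ((N : ℝ) - 1) / γ ≤ max Mst (((N : ℝ) - 1) / γ) := le_max_right _ _
    have hdivnn : 0 ≤ ((N : ℝ) - 1) / γ := by
      apply div_nonneg _ hγ0.le
      have : (2 : ℝ) ≤ (N : ℝ) := by exact_mod_cast hN
      linarith
    calc ∑ i ∈ S1ᶜ, ∑ j ∈ S2, B i j ≤ (N : ℝ) - 1 := hLhs
      _ = (((N : ℝ) - 1) / γ) * γ := by field_simp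
      _ ≤ (((N : ℝ) - 1) / γ) * ∑ i ∈ S1, ∑ j ∈ S2ᶜ, B i j :=
          mul_le_mul_of_nonneg_left hRγ hdivnn
      _ ≤ max Mst (((N : ℝ) - 1) / γ) * ∑ i ∈ S1, ∑ j ∈ S2ᶜ, B i j :=
          mul_le_mul_of_nonneg_right hM hRnn
end

section
/- Let B(t) = [b_ij(t)], t ≥ 0, be a sequence of N×N row-stochastic matrices with b_ii(t) ≥ γ for all i and t, where γ > 0 is a constant. If the persistent graph of the sequence — the directed graph on {1,…,N} whose arcs are the pairs (j,i) with ∑_{t=0}^∞ b_ij(t) = ∞ — is strongly connected, then the sequence B(t) has the absolute infinite flow property: for every sequence S(t), t ≥ 0, of nonempty proper subsets of {1,…,N} all having the same cardinality, ∑_{t=0}^∞ ( ∑_{i∉S(t+1), j∈S(t)} b_ij(t) + ∑_{i∈S(t+1), j∉S(t)} b_ij(t) ) = ∞. -/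
open Filter Finset

lemma cross_edge18 {N : ℕ} {r : Fin N → Fin N → Prop} {S : Finset (Fin N)}
    {a b : Fin N} (h : Relation.ReflTransGen r a b) (ha : a ∈ S) (hb : b ∉ S) :
    ∃ p ∈ S, ∃ q, q ∉ S ∧ r p q := by
  induction h with
  | refl => exact absurd ha hb
  | @tail c d hac hcd ih =>
    by_cases hc : c ∈ S
    · exact ⟨c, hc, d, hb, hcd⟩
    · exact ih hc

theorem stmt18 (N : ℕ) (hN : 2 ≤ N) (γ : ℝ) (hγ : 0 < γ)
    (B : ℕ → Matrix (Fin N) (Fin N) ℝ)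
    (hnonneg : ∀ t i j, 0 ≤ B t i j)
    (hrow : ∀ t i, ∑ j, B t i j = 1)
    (hdiag : ∀ t i, γ ≤ B t i i)
    (hsc : ∀ a b : Fin N, Relation.ReflTransGen
      (fun p q : Fin N => Tendsto (fun n => ∑ t ∈ Finset.range n, B t q p) atTop atTop) a b) :
    ∀ S : ℕ → Finset (Fin N),
      (∀ t, (S t).Nonempty ∧ S t ≠ Finset.univ) →
      (∀ t, (S t).card = (S 0).card) →
      Tendsto (fun n => ∑ t ∈ Finset.range n,
        ((∑ i ∈ (S (t + 1))ᶜ, ∑ j ∈ S t, B t i j) +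
          ∑ i ∈ S (t + 1), ∑ j ∈ (S t)ᶜ, B t i j)) atTop atTop := by
  intro S hS hcard
  set F : ℕ → ℝ := fun t => (∑ i ∈ (S (t + 1))ᶜ, ∑ j ∈ S t, B t i j) +
      ∑ i ∈ S (t + 1), ∑ j ∈ (S t)ᶜ, B t i j with hF
  have h1nn : ∀ t, 0 ≤ ∑ i ∈ (S (t + 1))ᶜ, ∑ j ∈ S t, B t i j :=
    fun t => Finset.sum_nonneg fun i _ => Finset.sum_nonneg fun j _ => hnonneg t i j
  have h2nn : ∀ t, 0 ≤ ∑ i ∈ S (t + 1), ∑ j ∈ (S t)ᶜ, B t i j :=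
    fun t => Finset.sum_nonneg fun i _ => Finset.sum_nonneg fun j _ => hnonneg t i j
  have hFnn : ∀ t, 0 ≤ F t := fun t => add_nonneg (h1nn t) (h2nn t)
  by_contra hnot
  have hsum : Summable F := (summable_iff_not_tendsto_nat_atTop_of_nonneg hFnn).2 hnot
  have hchange : ∀ t, S (t + 1) ≠ S t → γ ≤ F t := by
    intro t hne
    obtain ⟨i, hi1, hi0⟩ : ∃ i, i ∈ S (t + 1) ∧ i ∉ S t := by
      by_contra h
      push_neg at h
      exact hne (Finset.eq_of_subset_of_card_le (fun x hx => h x hx)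
        (by rw [hcard t, hcard (t + 1)]))
    calc γ ≤ B t i i := hdiag t i
      _ ≤ ∑ j ∈ (S t)ᶜ, B t i j :=
          Finset.single_le_sum (fun j _ => hnonneg t i j) (Finset.mem_compl.2 hi0)
      _ ≤ ∑ i' ∈ S (t + 1), ∑ j ∈ (S t)ᶜ, B t i' j :=
          Finset.single_le_sum (fun i' _ => Finset.sum_nonneg fun j _ => hnonneg t i' j) hi1
      _ ≤ F t := le_add_of_nonneg_left (h1nn t)
  obtain ⟨T, hT⟩ : ∃ T, ∀ t ≥ T, F t < γ := by
    have h0 := hsum.tendsto_atTop_zero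
    have := h0.eventually_lt_const hγ
    exact eventually_atTop.1 this
  have hconst : ∀ t ≥ T, S t = S T := by
    intro t ht
    induction t with
    | zero => rw [Nat.le_zero.1 ht]
    | succ n ih =>
      rcases Nat.lt_or_ge T (n + 1) with h | h
      · have hn : n ≥ T := by omega
        have : S (n + 1) = S n := by
          by_contra hne
          exact absurd (hchange n hne) (not_le.2 (hT n hn))
        rw [this, ih hn]
      · rw [show T = n + 1 by omega]
  obtain ⟨a, ha⟩ := (hS T).1
  obtain ⟨b, hb⟩ : ∃ b, b ∉ S T := by
    by_contra h
    push_neg at h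
    exact (hS T).2 (Finset.eq_univ_iff_forall.2 h)
  obtain ⟨p, hp, q, hq, hrel⟩ := cross_edge18 (hsc a b) ha hb
  have hle : ∀ t, B (t + T) q p ≤ F (t + T) := by
    intro t
    have hSt : S (t + T) = S T := hconst _ (Nat.le_add_left T t)
    have hSt1 : S (t + T + 1) = S T := hconst _ (by omega)
    calc B (t + T) q p ≤ ∑ j ∈ S (t + T), B (t + T) q j :=
          Finset.single_le_sum (fun j _ => hnonneg _ q j) (by rw [hSt]; exact hp)
      _ ≤ ∑ i ∈ (S (t + T + 1))ᶜ, ∑ j ∈ S (t + T), B (t + T) i j :=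
          Finset.single_le_sum (fun i _ => Finset.sum_nonneg fun j _ => hnonneg _ i j)
            (Finset.mem_compl.2 (by rw [hSt1]; exact hq))
      _ ≤ F (t + T) := le_add_of_nonneg_right (h2nn _)
  have hsummable : Summable (fun t => B t q p) := by
    rw [← summable_nat_add_iff T]
    exact Summable.of_nonneg_of_le (fun t => hnonneg _ _ _) hle
      ((summable_nat_add_iff T).2 hsum)
  exact (summable_iff_not_tendsto_nat_atTop_of_nonneg (fun t => hnonneg t q p)).1
    hsummable hrel
end

section
/- There exist a sequence A(t) = [a_ij(t)], t ≥ 1, of 3×3 row-stochastic matrices with strictly positive diagonal entries, satisfying the cut-balance condition with constant K = 2 (i.e., for every t ≥ 1 and every nonempty proper subset S of {1,2,3}, ∑_{i∉S, j∈S} a_ij(t) ≤ 2 ∑_{i∈S, j∉S} a_ij(t)), whose persistent graph (arcs (j,i) with ∑_{t=1}^∞ a_ij(t) = ∞) is strongly connected, and which has the absolute infinite flow property, together with an initial state x(1) ∈ ℝ³, such that the system x(t+1) = A(t) x(t) fails to reach consensus: lim_{t→∞} Ψ(t) > 0, where Ψ(t) = max_i x_i(t) − min_i x_i(t). In particular,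 the conclusions of consensus results requiring a uniform positive lower bound η on the diagonal entries a_ii(t) can fail when no such uniform lower bound exists. -/
/-!
At step `t` one agent `p` moves to the midpoint of its value and that of a second agent `q`,
while `q` copies `p` up to keeping the weight `d t = 2 ^ (-(t + 2))` on itself. The pairs
`{p, q}` run through all three pairs of agents, each with weight at least `1 / 2` every third
step, so every arc is persistent. A cut sequence with flow below `1 / 4` at some step must stay
put and must not separate that step's pair; two consecutive pairs cover all three agents, so this
cannot happen at two consecutive steps, which gives the absolute infinite flow property.
Consensus still fails: the averaging agent `p` and the untouched third agent hold the two extreme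
values, which after the step are held by `q` and the third agent up to an error `d t`. So the
extremes are never averaged and the spread stays at least `1 - ∑ d t = 1 / 2`.
-/

open Filter Finset

noncomputable def spread {n : Type*} (x : n → ℝ) : ℝ := (⨆ i, x i) - ⨅ i, x i

lemma abs_sub_le_spread {n : Type*} [Finite n] (x : n → ℝ) (i j : n) :
    |x i - x j| ≤ spread x := by
  have hsup : ∀ k, x k ≤ ⨆ i, x i := le_ciSup (Set.finite_range x).bddAbove
  have hinf : ∀ k, (⨅ i, x i) ≤ x k := ciInf_le (Set.finite_range x).bddBelow
  rw [spread, abs_sub_le_iff]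
  constructor <;> linarith [hsup i, hsup j, hinf i, hinf j]

namespace Matrix

variable {n : Type*} [Fintype n] [DecidableEq n] {M : Matrix n n ℝ}

lemma mulVec_apply_le_of_mem_rowStochastic (hM : M ∈ rowStochastic ℝ n) {x : n → ℝ} {c : ℝ}
    (hx : ∀ j, x j ≤ c) (i : n) : (M *ᵥ x) i ≤ c :=
  calc (M *ᵥ x) i = ∑ j, M i j * x j := rfl
    _ ≤ ∑ j, M i j * c :=
      sum_le_sum fun j _ => mul_le_mul_of_nonneg_left (hx j) (nonneg_of_mem_rowStochastic hM)
    _ = c := by rw [← Finset.sum_mul, sum_row_of_mem_rowStochastic hM, one_mul]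

lemma le_mulVec_apply_of_mem_rowStochastic (hM : M ∈ rowStochastic ℝ n) {x : n → ℝ} {c : ℝ}
    (hx : ∀ j, c ≤ x j) (i : n) : c ≤ (M *ᵥ x) i :=
  calc c = ∑ j, M i j * c := by rw [← Finset.sum_mul, sum_row_of_mem_rowStochastic hM, one_mul]
    _ ≤ ∑ j, M i j * x j :=
      sum_le_sum fun j _ => mul_le_mul_of_nonneg_left (hx j) (nonneg_of_mem_rowStochastic hM)
    _ = (M *ᵥ x) i := rfl

lemma spread_mulVec_le_of_mem_rowStochastic [Nonempty n] (hM : M ∈ rowStochastic ℝ n)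
    (x : n → ℝ) : spread (M *ᵥ x) ≤ spread x :=
  sub_le_sub
    (ciSup_le <| mulVec_apply_le_of_mem_rowStochastic hM <| le_ciSup (Set.finite_range x).bddAbove)
    (le_ciInf <| le_mulVec_apply_of_mem_rowStochastic hM <| ciInf_le (Set.finite_range x).bddBelow)

lemma mulVec_boole_apply (S : Finset n) (i : n) :
    (M *ᵥ fun j => if j ∈ S then 1 else 0) i = ∑ j ∈ S, M i j := by
  simp [mulVec, dotProduct, Finset.sum_ite_mem]

end Matrix

section CutFlow

variable {n : Type*} [Fintype n] [DecidableEq n]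

/-- The flow across the cut between `S` at time `t` and `T` at time `t + 1`. -/
def cutFlow (M : Matrix n n ℝ) (S T : Finset n) : ℝ :=
  ∑ i ∈ Tᶜ, ∑ j ∈ S, M i j + ∑ i ∈ T, ∑ j ∈ Sᶜ, M i j

variable {M : Matrix n n ℝ}

lemma cutFlow_nonneg (hM : ∀ i j, 0 ≤ M i j) (S T : Finset n) : 0 ≤ cutFlow M S T :=
  add_nonneg (sum_nonneg fun i _ => sum_nonneg fun j _ => hM i j)
    (sum_nonneg fun i _ => sum_nonneg fun j _ => hM i j)

lemma le_cutFlow (hM : ∀ i j, 0 ≤ M i j) {S T : Finset n} {i j : n} (h : i ∈ T ↔ j ∉ S) :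
    M i j ≤ cutFlow M S T := by
  have hsum : ∀ I J : Finset n, i ∈ I → j ∈ J → M i j ≤ ∑ i ∈ I, ∑ j ∈ J, M i j :=
    fun I J hi hj => (single_le_sum (fun j _ => hM i j) hj).trans
      (single_le_sum (fun i _ => sum_nonneg fun j _ => hM i j) hi)
  have h₁ := sum_nonneg fun i (_ : i ∈ Tᶜ) => sum_nonneg fun j (_ : j ∈ S) => hM i j
  have h₂ := sum_nonneg fun i (_ : i ∈ T) => sum_nonneg fun j (_ : j ∈ Sᶜ) => hM i j
  unfold cutFlow
  by_cases hi : i ∈ T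
  · linarith [hsum T Sᶜ hi (mem_compl.2 (h.1 hi))]
  · linarith [hsum Tᶜ S (mem_compl.2 hi) (not_not.1 (mt h.2 hi))]

end CutFlow

lemma tendsto_sum_Icc_atTop_of_frequently_le {w : ℕ → ℝ} {ε : ℝ} (hw : ∀ t, 1 ≤ t → 0 ≤ w t)
    (hε : 0 < ε) (h : ∃ᶠ t in atTop, ε ≤ w t) :
    Tendsto (fun n => ∑ t ∈ Icc 1 n, w t) atTop atTop := by
  have hshift : ∀ n, ∑ t ∈ Icc 1 n, w t = ∑ k ∈ range n, w (k + 1) := by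
    intro n
    rw [← Ico_add_one_right_eq_Icc, sum_Ico_eq_sum_range]
    simp [add_comm]
  simp only [hshift]
  refine (not_summable_iff_tendsto_nat_atTop_of_nonneg fun k => hw (k + 1) le_add_self).1 ?_
  intro hsum
  have hlim : Tendsto w atTop (nhds 0) := (tendsto_add_atTop_iff_nat 1).1 hsum.tendsto_atTop_zero
  obtain ⟨t, hεt, hlt⟩ := (h.and_eventually (hlim.eventually (gt_mem_nhds hε))).exists
  exact (lt_irrefl ε) (hεt.trans_lt hlt)

section AvgCopy

open Matrix

variable {n : Type*} [DecidableEq n]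

/-- Row `p` averages the values of `p` and `q`; row `q` puts weight `1 - d` on `p` and `d` on
itself; every other row is that of the identity. -/
noncomputable def avgCopy (p q : n) (d : ℝ) : Matrix n n ℝ :=
  1 + (1 / 2 : ℝ) • (single p q 1 - single p p 1) + (1 - d) • (single q p 1 - single q q 1)

variable {p q : n} {d : ℝ}

lemma avgCopy_apply (hpq : p ≠ q) (i j : n) :
    avgCopy p q d i j =
      if i = p then (if j = p ∨ j = q then 1 / 2 else 0)
      else if i = q then (if j = p then 1 - d else if j = q then d else 0)
      else if i = j then 1 else 0 := by
  simp only [avgCopy, Matrix.add_apply, Matrix.smul_apply, Matrix.sub_apply, one_apply,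
    single_apply, smul_eq_mul]
  split_ifs <;> grind

lemma avgCopy_nonneg (hpq : p ≠ q) (hd₀ : 0 ≤ d) (hd₁ : d ≤ 1) (i j : n) :
    0 ≤ avgCopy p q d i j := by
  rw [avgCopy_apply hpq]
  split_ifs <;> linarith

lemma avgCopy_apply_self_pos (hpq : p ≠ q) (hd : 0 < d) (i : n) : 0 < avgCopy p q d i i := by
  rw [avgCopy_apply hpq]
  split_ifs <;> grind

lemma one_fourth_le_avgCopy_apply_self (hpq : p ≠ q) {i : n} (hi : i ≠ q) :
    1 / 4 ≤ avgCopy p q d i i := by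
  rw [avgCopy_apply hpq]
  split_ifs <;> grind

lemma avgCopy_apply_left_right (hpq : p ≠ q) : avgCopy p q d p q = 1 / 2 := by
  simp [avgCopy_apply hpq]

lemma avgCopy_apply_right_left (hpq : p ≠ q) : avgCopy p q d q p = 1 - d := by
  simp [avgCopy_apply hpq, hpq.symm]

variable [Fintype n]

lemma avgCopy_mulVec (p q : n) (d : ℝ) (x : n → ℝ) :
    avgCopy p q d *ᵥ x =
      x + Pi.single p ((x q - x p) / 2) + Pi.single q ((1 - d) * (x p - x q)) := by
  ext i
  simp only [avgCopy, add_mulVec, sub_mulVec, smul_mulVec, single_mulVec, one_mulVec,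
    Pi.add_apply, Pi.smul_apply, Pi.sub_apply, Function.update_apply, Pi.single_apply,
    Pi.zero_apply, smul_eq_mul]
  split_ifs <;> ring

lemma avgCopy_mulVec_apply_right (hpq : p ≠ q) (x : n → ℝ) :
    (avgCopy p q d *ᵥ x) q = (1 - d) * x p + d * x q := by
  simp [avgCopy_mulVec, hpq.symm]
  ring

lemma avgCopy_mulVec_apply_of_ne {i : n} (hp : i ≠ p) (hq : i ≠ q) (x : n → ℝ) :
    (avgCopy p q d *ᵥ x) i = x i := by
  simp [avgCopy_mulVec, hp, hq]

lemma avgCopy_mem_rowStochastic (hpq : p ≠ q) (hd₀ : 0 ≤ d) (hd₁ : d ≤ 1) :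
    avgCopy p q d ∈ rowStochastic ℝ n :=
  ⟨avgCopy_nonneg hpq hd₀ hd₁, by simp [avgCopy_mulVec]⟩

lemma sum_avgCopy_mulVec (T : Finset n) (x : n → ℝ) :
    ∑ i ∈ T, (avgCopy p q d *ᵥ x) i = ∑ i ∈ T, x i + (if p ∈ T then (x q - x p) / 2 else 0)
      + (if q ∈ T then (1 - d) * (x p - x q) else 0) := by
  simp only [avgCopy_mulVec, Pi.add_apply, sum_add_distrib, sum_pi_single']

lemma avgCopy_cut_le (hd₀ : 0 ≤ d) (hd : d ≤ 3 / 4) (S : Finset n) :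
    ∑ i ∈ Sᶜ, ∑ j ∈ S, avgCopy p q d i j ≤ 2 * ∑ i ∈ S, ∑ j ∈ Sᶜ, avgCopy p q d i j := by
  simp only [← mulVec_boole_apply, sum_avgCopy_mulVec]
  have h₁ : ∑ i ∈ Sᶜ, (if i ∈ S then (1 : ℝ) else 0) = 0 :=
    sum_eq_zero fun i hi => if_neg (mem_compl.1 hi)
  have h₂ : ∑ i ∈ S, (if i ∈ Sᶜ then (1 : ℝ) else 0) = 0 :=
    sum_eq_zero fun i hi => if_neg (notMem_compl.2 hi)
  rw [h₁, h₂]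
  by_cases hp : p ∈ S <;> by_cases hq : q ∈ S <;> simp [hp, hq] <;> linarith

lemma eq_and_iff_of_cutFlow_avgCopy_lt (hpq : p ≠ q) (hd₀ : 0 ≤ d) (hd : d ≤ 3 / 4)
    {S T : Finset n} (h : cutFlow (avgCopy p q d) S T < 1 / 4) : T = S ∧ (p ∈ S ↔ q ∈ S) := by
  have hnn := avgCopy_nonneg hpq hd₀ (by linarith)
  have hpair : p ∈ S ↔ q ∈ S := by
    by_contra hne
    by_cases hp : p ∈ T ↔ p ∉ S
    · linarith [le_cutFlow hnn hp, one_fourth_le_avgCopy_apply_self (d := d) hpq hpq]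
    · have hq : p ∈ T ↔ q ∉ S := by tauto
      linarith [le_cutFlow hnn hq, avgCopy_apply_left_right (d := d) hpq]
  refine ⟨?_, hpair⟩
  ext i
  by_contra hi
  have hi' : i ∈ T ↔ i ∉ S := by tauto
  by_cases hiq : i = q
  · subst hiq
    have hq : i ∈ T ↔ p ∉ S := by tauto
    linarith [le_cutFlow hnn hq, avgCopy_apply_right_left (d := d) hpq]
  · linarith [le_cutFlow hnn hi', one_fourth_le_avgCopy_apply_self (d := d) hpq hiq]

lemma abs_sub_sub_le_abs_avgCopy_mulVec_sub (hpq : p ≠ q) (hd₀ : 0 ≤ d) {r : n} (hrp : r ≠ p)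
    (hrq : r ≠ q) (x : n → ℝ) :
    |x p - x r| - d * |x p - x q| ≤ |(avgCopy p q d *ᵥ x) q - (avgCopy p q d *ᵥ x) r| := by
  rw [avgCopy_mulVec_apply_right hpq, avgCopy_mulVec_apply_of_ne hrp hrq,
    show (1 - d) * x p + d * x q - x r = (x p - x r) - d * (x p - x q) by ring]
  calc |x p - x r| - d * |x p - x q| = |x p - x r| - |d * (x p - x q)| := by
        rw [abs_mul, abs_of_nonneg hd₀]
    _ ≤ _ := abs_sub_abs_le_abs_sub _ _

end AvgCopy

namespace Fin3

lemma sub_one_ne_add_one (r : Fin 3) : r - 1 ≠ r + 1 := by revert r; decide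

lemma ne_sub_one (r : Fin 3) : r ≠ r - 1 := by revert r; decide

lemma ne_add_one (r : Fin 3) : r ≠ r + 1 := by revert r; decide

lemma exists_eq_sub_one_add_one {a b : Fin 3} (hab : a ≠ b) :
    ∃ r : Fin 3, (a = r - 1 ∧ b = r + 1) ∨ (a = r + 1 ∧ b = r - 1) := by
  revert a b; decide

lemma eq_empty_or_eq_univ_of_iff {S : Finset (Fin 3)} {r : Fin 3} (h₁ : r - 1 ∈ S ↔ r + 1 ∈ S)
    (h₂ : r ∈ S ↔ r + 1 + 1 ∈ S) : S = ∅ ∨ S = univ := by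
  revert S r; decide

end Fin3

namespace NoConsensusExample

open Matrix

/-- The agent left alone at step `t`: agent `idle t - 1` averages, agent `idle t + 1` copies. -/
def idle (t : ℕ) : Fin 3 := Fin.ofNat 3 t

noncomputable def copyWeight (t : ℕ) : ℝ := (1 / 2) ^ (t + 2)

noncomputable def A (t : ℕ) : Matrix (Fin 3) (Fin 3) ℝ :=
  avgCopy (idle t - 1) (idle t + 1) (copyWeight t)

noncomputable def x : ℕ → Fin 3 → ℝ
  | 0 => ![0, 1 / 2, 1]
  | t + 1 => A t *ᵥ x t

lemma idle_succ (t : ℕ) : idle (t + 1) = idle t + 1 := by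
  ext
  simp [idle, Fin.val_add]

lemma frequently_idle_eq (r : Fin 3) : ∃ᶠ t in atTop, idle t = r := by
  refine frequently_atTop.2 fun N => ⟨3 * N + r, by omega, Fin.ext ?_⟩
  simp [idle]

lemma copyWeight_pos (t : ℕ) : 0 < copyWeight t := by
  unfold copyWeight
  positivity

lemma copyWeight_le (t : ℕ) : copyWeight t ≤ 1 / 4 :=
  calc copyWeight t ≤ (1 / 2) ^ 2 := pow_le_pow_of_le_one (by norm_num) (by norm_num) (by omega)
    _ = 1 / 4 := by norm_num

lemma A_mem_rowStochastic (t : ℕ) : A t ∈ rowStochastic ℝ (Fin 3) :=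
  avgCopy_mem_rowStochastic (Fin3.sub_one_ne_add_one _) (copyWeight_pos t).le
    ((copyWeight_le t).trans (by norm_num))

lemma antitone_spread_x : Antitone fun t => spread (x t) :=
  antitone_nat_of_succ_le fun t => spread_mulVec_le_of_mem_rowStochastic (A_mem_rowStochastic t) _

lemma spread_x_le_one (t : ℕ) : spread (x t) ≤ 1 := by
  have hsup : (⨆ i, x 0 i) ≤ 1 := ciSup_le fun i => by fin_cases i <;> norm_num [x]
  have hinf : 0 ≤ ⨅ i, x 0 i := le_ciInf fun i => by fin_cases i <;> norm_num [x]
  have h₀ : spread (x 0) ≤ 1 := by rw [spread]; linarith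
  exact (antitone_spread_x (Nat.zero_le t)).trans h₀

lemma half_add_half_pow_le_abs_x_sub (t : ℕ) :
    1 / 2 + (1 / 2) ^ (t + 1) ≤ |x t (idle t - 1) - x t (idle t)| := by
  induction t with
  | zero =>
    rw [show idle 0 - 1 = 2 by decide, show idle 0 = 0 by decide]
    norm_num [x, Matrix.cons_val_two]
  | succ t ih =>
    set r := idle t
    have hstep := abs_sub_sub_le_abs_avgCopy_mulVec_sub (Fin3.sub_one_ne_add_one r)
      (copyWeight_pos t).le (Fin3.ne_sub_one r) (Fin3.ne_add_one r) (x t)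
    have hcopy : copyWeight t * |x t (r - 1) - x t (r + 1)| ≤ copyWeight t :=
      mul_le_of_le_one_right (copyWeight_pos t).le
        ((abs_sub_le_spread _ _ _).trans (spread_x_le_one t))
    have hpow : ((1 : ℝ) / 2) ^ (t + 1 + 1) = (1 / 2) ^ (t + 1) - copyWeight t := by
      unfold copyWeight; ring
    rw [idle_succ, add_sub_cancel_right, abs_sub_comm]
    change _ ≤ |(A t *ᵥ x t) (r + 1) - (A t *ᵥ x t) r|
    unfold A
    linarith

lemma tendsto_spread_x : ∃ c : ℝ, 0 < c ∧ Tendsto (fun t => spread (x t)) atTop (nhds c) := by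
  have hlow (t : ℕ) : 1 / 2 ≤ spread (x t) :=
    (le_add_of_nonneg_right (by positivity)).trans
      ((half_add_half_pow_le_abs_x_sub t).trans (abs_sub_le_spread _ _ _))
  exact ⟨⨅ t, spread (x t), (by norm_num : (0 : ℝ) < 1 / 2).trans_le (le_ciInf hlow),
    tendsto_atTop_ciInf antitone_spread_x ⟨1 / 2, Set.forall_mem_range.2 hlow⟩⟩

lemma tendsto_sum_A_atTop {a b : Fin 3} (hab : a ≠ b) :
    Tendsto (fun n => ∑ t ∈ Icc 1 n, A t b a) atTop atTop := by
  obtain ⟨r, hr⟩ := Fin3.exists_eq_sub_one_add_one hab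
  refine tendsto_sum_Icc_atTop_of_frequently_le
    (fun t _ => nonneg_of_mem_rowStochastic (A_mem_rowStochastic t))
    (by norm_num : (0 : ℝ) < 1 / 2) ((frequently_idle_eq r).mono fun t ht => ?_)
  have hpq := Fin3.sub_one_ne_add_one (idle t)
  rcases hr with ⟨rfl, rfl⟩ | ⟨rfl, rfl⟩ <;> rw [A, ← ht]
  · rw [avgCopy_apply_right_left hpq]
    linarith [copyWeight_le t]
  · rw [avgCopy_apply_left_right hpq]

lemma frequently_one_fourth_le_cutFlow_A (S : ℕ → Finset (Fin 3))
    (hS : ∀ t, 1 ≤ t → (S t).Nonempty ∧ S t ≠ univ) :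
    ∃ᶠ t in atTop, 1 / 4 ≤ cutFlow (A t) (S t) (S (t + 1)) := by
  have hd (t : ℕ) : 0 ≤ copyWeight t ∧ copyWeight t ≤ 3 / 4 :=
    ⟨(copyWeight_pos t).le, (copyWeight_le t).trans (by norm_num)⟩
  refine frequently_atTop.2 fun N => ?_
  by_contra! h
  obtain ⟨hT, h₁⟩ := eq_and_iff_of_cutFlow_avgCopy_lt (Fin3.sub_one_ne_add_one _)
    (hd (N + 1)).1 (hd (N + 1)).2 (h (N + 1) (by omega))
  obtain ⟨-, h₂⟩ := eq_and_iff_of_cutFlow_avgCopy_lt (Fin3.sub_one_ne_add_one _)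
    (hd (N + 2)).1 (hd (N + 2)).2 (h (N + 2) (by omega))
  rw [hT, idle_succ, add_sub_cancel_right] at h₂
  obtain ⟨hne, hnu⟩ := hS (N + 1) (by omega)
  rcases Fin3.eq_empty_or_eq_univ_of_iff h₁ h₂ with h | h
  · exact hne.ne_empty h
  · exact hnu h

end NoConsensusExample

theorem stmt19 :
    ∃ (A : ℕ → Matrix (Fin 3) (Fin 3) ℝ) (x : ℕ → Fin 3 → ℝ),
      -- entrywise nonnegative, row-stochastic, strictly positive diagonal (for t ≥ 1)
      (∀ t, 1 ≤ t → ∀ i j, 0 ≤ A t i j) ∧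
      (∀ t, 1 ≤ t → ∀ i, ∑ j, A t i j = 1) ∧
      (∀ t, 1 ≤ t → ∀ i, 0 < A t i i) ∧
      -- cut-balance with constant K = 2
      (∀ t, 1 ≤ t → ∀ S : Finset (Fin 3), S.Nonempty → S ≠ Finset.univ →
        ∑ i ∈ Sᶜ, ∑ j ∈ S, A t i j ≤ 2 * ∑ i ∈ S, ∑ j ∈ Sᶜ, A t i j) ∧
      -- persistent graph strongly connected
      (∀ a b : Fin 3, Relation.ReflTransGen
        (fun p q : Fin 3 =>
          Tendsto (fun n => ∑ t ∈ Finset.Icc 1 n, A t q p) atTop atTop) a b) ∧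
      -- absolute infinite flow property
      (∀ S : ℕ → Finset (Fin 3),
        (∀ t, 1 ≤ t → (S t).Nonempty ∧ S t ≠ Finset.univ) →
        (∀ t, 1 ≤ t → (S t).card = (S 1).card) →
        Tendsto (fun n => ∑ t ∈ Finset.Icc 1 n,
          ((∑ i ∈ (S (t + 1))ᶜ, ∑ j ∈ S t, A t i j) +
            ∑ i ∈ S (t + 1), ∑ j ∈ (S t)ᶜ, A t i j)) atTop atTop) ∧
      -- dynamics
      (∀ t, 1 ≤ t → ∀ i, x (t + 1) i = ∑ j, A t i j * x t j) ∧
      -- failure of consensus: lim Ψ(t) > 0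
      (∃ c : ℝ, 0 < c ∧
        Tendsto (fun t => (⨆ i, x t i) - (⨅ i, x t i)) atTop (nhds c)) := by
  open NoConsensusExample Matrix in
  refine ⟨A, x, fun t _ _ _ => nonneg_of_mem_rowStochastic (A_mem_rowStochastic t),
    fun t _ => sum_row_of_mem_rowStochastic (A_mem_rowStochastic t),
    fun t _ => avgCopy_apply_self_pos (Fin3.sub_one_ne_add_one _) (copyWeight_pos t),
    fun t _ S _ _ => avgCopy_cut_le (copyWeight_pos t).le ((copyWeight_le t).trans (by norm_num)) S,
    fun a b => ?_, fun S hS _ => ?_, fun t _ i => rfl, tendsto_spread_x⟩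
  · by_cases hab : a = b
    · exact hab ▸ .refl
    · exact .single (tendsto_sum_A_atTop hab)
  · exact tendsto_sum_Icc_atTop_of_frequently_le
      (fun t _ => cutFlow_nonneg
        (fun _ _ => nonneg_of_mem_rowStochastic (A_mem_rowStochastic t)) _ _)
      (by norm_num) (frequently_one_fourth_le_cutFlow_A S hS)
end
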